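/- arXiv:1711.01706 — 6 statements merged into one kernel-verified Lean document; each statement's English description precedes it below -/
import Mathlib

section
/- Let p be a prime with p ≡ 1 (mod 3), and let L, M be integers with 4p = L² + 27M². If q is a prime with q ∉ {2, 3, p} and q divides M, then q is a cubic residue modulo p. -/
/-!
Let `χ` be a cubic character of `𝔽_p` with values in `ℤ[θ] = ℤ[X]/(X² + X + 1)` and write its
Jacobi sum as `J(χ, χ) = a + bθ`. Sending `θ` to a primitive cube root of unity in `ℂ`,
`|J|² = p` and `J ≡ -1 mod (θ - 1)²` give `p = a² - ab + b²` with `3 ∣ b`, i.e.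
`4p = (2a - b)² + 27(b/3)²`. Such a representation is unique up to signs, so `M = ±b/3` and `q ∣ b`.
Sending `θ` instead into an algebraically closed field of characteristic `q`, we get `J = a` and
`p = a²` with `a ∈ 𝔽_q^×`, so the Gauss sum `g` of `χ` satisfies `g³ = pJ = a³`, whence
`g^(q²) = g`. Frobenius, on the other hand, gives `g^(q²) = χ(q²)⁻¹ g`. Hence `χ(q)² = 1 = χ(q)³`,
so `χ(q) = 1` and `q` is a cube modulo `p`.
-/

open Polynomial

lemma sq_eq_sq_of_dvd_mul_sub_mul {p L M C D : ℤ} (hp : p ≠ 0)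
    (h₁ : 4 * p = L ^ 2 + 27 * M ^ 2) (h₂ : 4 * p = C ^ 2 + 27 * D ^ 2)
    (hdvd : p ∣ L * D - M * C) : M ^ 2 = D ^ 2 := by
  obtain ⟨t, ht⟩ := hdvd
  have h16 : 16 * p ^ 2 = (L * C + 27 * M * D) ^ 2 + 27 * p ^ 2 * t ^ 2 := by
    linear_combination (C ^ 2 + 27 * D ^ 2) * h₁ + 4 * p * h₂ + 27 * (L * D - M * C + p * t) * ht
  have ht0 : t = 0 := by
    have hp2 : 0 < p ^ 2 := by positivity
    have : t ^ 2 < 1 := by nlinarith [sq_nonneg (L * C + 27 * M * D)]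
    nlinarith
  have hLD : L * D = M * C := by rwa [ht0, mul_zero, sub_eq_zero] at ht
  have : 4 * p * M ^ 2 = 4 * p * D ^ 2 := by
    linear_combination M ^ 2 * h₂ - D ^ 2 * h₁ - (L * D + M * C) * hLD
  exact mul_left_cancel₀ (by positivity) this

theorem sq_eq_sq_of_four_mul_eq_sq_add_27_mul_sq {p L M C D : ℤ} (hp : Prime p)
    (h₁ : 4 * p = L ^ 2 + 27 * M ^ 2) (h₂ : 4 * p = C ^ 2 + 27 * D ^ 2) : M ^ 2 = D ^ 2 := by
  have hprod : p ∣ (L * D - M * C) * (L * D - M * -C) :=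
    ⟨4 * (D ^ 2 - M ^ 2), by linear_combination M ^ 2 * h₂ - D ^ 2 * h₁⟩
  rcases hp.dvd_or_dvd hprod with h | h
  · exact sq_eq_sq_of_dvd_mul_sub_mul hp.ne_zero h₁ h₂ h
  · exact sq_eq_sq_of_dvd_mul_sub_mul hp.ne_zero h₁ (by rw [h₂, neg_sq]) h

abbrev EisensteinInt : Type := AdjoinRoot (cyclotomic 3 ℤ)

local notation "θ" => AdjoinRoot.root (cyclotomic 3 ℤ)

namespace EisensteinInt

lemma root_sq : θ ^ 2 = -θ - 1 := by
  have h : (X ^ 2 + X + 1 : ℤ[X]).eval₂ (AdjoinRoot.of _) θ = 0 := by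
    rw [← cyclotomic_three]
    exact AdjoinRoot.eval₂_root _
  simp only [eval₂_add, eval₂_X_pow, eval₂_X, eval₂_one] at h
  linear_combination h

lemma root_pow_three : θ ^ 3 = 1 := by
  linear_combination (θ - 1) * root_sq

lemma exists_eq_intCast_add_mul_root (x : EisensteinInt) : ∃ a b : ℤ, x = a + b * θ := by
  obtain ⟨P, rfl⟩ := AdjoinRoot.mk_surjective x
  induction P using Polynomial.induction_on' with
  | add P Q hP hQ =>
    obtain ⟨a, b, hab⟩ := hP
    obtain ⟨c, d, hcd⟩ := hQ
    exact ⟨a + c, b + d, by rw [map_add, hab, hcd]; push_cast; ring⟩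
  | monomial n c =>
    induction n with
    | zero => exact ⟨c, 0, by simp⟩
    | succ n ih =>
      obtain ⟨a, b, hab⟩ := ih
      refine ⟨-b, a - b, ?_⟩
      rw [← C_mul_X_pow_eq_monomial, pow_succ, ← mul_assoc, map_mul, C_mul_X_pow_eq_monomial,
        hab, AdjoinRoot.mk_X]
      push_cast
      linear_combination b * root_sq

variable {R : Type*} [CommRing R] [IsDomain R] {ζ : R}

noncomputable def lift (hζ : IsPrimitiveRoot ζ 3) : EisensteinInt →+* R :=
  AdjoinRoot.lift (Int.castRingHom R) ζ <| by
    rw [eval₂_eq_eval_map, map_cyclotomic_int]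
    exact hζ.isRoot_cyclotomic (by norm_num)

@[simp]
lemma lift_root (hζ : IsPrimitiveRoot ζ 3) : lift hζ θ = ζ :=
  AdjoinRoot.lift_root _

lemma exists_eq_intCast_add_mul_of_mem_adjoin (hζ : IsPrimitiveRoot ζ 3) {z : R}
    (hz : z ∈ Algebra.adjoin ℤ {ζ}) : ∃ c d : ℤ, z = c + d * ζ := by
  rw [Algebra.adjoin_singleton_eq_range_aeval] at hz
  obtain ⟨P, rfl⟩ := hz
  obtain ⟨c, d, hcd⟩ := exists_eq_intCast_add_mul_root (AdjoinRoot.mk _ P)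
  refine ⟨c, d, ?_⟩
  simpa [lift, aeval_def, AdjoinRoot.lift_mk] using congrArg (lift hζ) hcd

end EisensteinInt

open EisensteinInt

section CubicChar

variable (p : ℕ) [Fact p.Prime] (hp : 3 ∣ p - 1)

noncomputable def cubicChar : MulChar (ZMod p) EisensteinInt :=
  MulChar.ofRootOfUnity (ζ := Units.ofPowEqOne _ 3 root_pow_three three_ne_zero)
    (by
      obtain ⟨k, hk⟩ := hp
      rw [mem_rootsOfUnity, ZMod.card_units, hk, pow_mul]
      ext
      simp)
    IsCyclic.exists_generator.choose_spec

variable {p} {R : Type*} [CommRing R] [IsDomain R] {ζ : R}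

lemma cubicChar_ringHomComp_generator (hζ : IsPrimitiveRoot ζ 3) :
    (cubicChar p hp).ringHomComp (lift hζ) (IsCyclic.exists_generator.choose : (ZMod p)ˣ) = ζ := by
  rw [MulChar.ringHomComp_apply, cubicChar, MulChar.ofRootOfUnity_spec]
  simp

lemma orderOf_cubicChar_ringHomComp (hζ : IsPrimitiveRoot ζ 3) :
    orderOf ((cubicChar p hp).ringHomComp (lift hζ)) = 3 := by
  have hg := (IsCyclic.exists_generator (α := (ZMod p)ˣ)).choose_spec
  have : Fact (Nat.Prime 3) := ⟨Nat.prime_three⟩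
  refine orderOf_eq_prime ?_ ?_
  · rw [MulChar.eq_iff hg, MulChar.pow_apply_coe, cubicChar_ringHomComp_generator hp hζ,
      MulChar.one_apply_coe, hζ.pow_eq_one]
  · rw [Ne, MulChar.eq_iff hg, cubicChar_ringHomComp_generator hp hζ, MulChar.one_apply_coe]
    exact hζ.ne_one (by norm_num)

lemma exists_pow_three_eq_of_cubicChar_ringHomComp_eq_one (hζ : IsPrimitiveRoot ζ 3)
    {x : ZMod p} (hx : x ≠ 0) (h : (cubicChar p hp).ringHomComp (lift hζ) x = 1) :
    ∃ y : ZMod p, y ^ 3 = x := by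
  set g : (ZMod p)ˣ := IsCyclic.exists_generator.choose
  have hg : ∀ u, u ∈ Subgroup.zpowers g := IsCyclic.exists_generator.choose_spec
  obtain ⟨k, hk⟩ :=
    (Submonoid.mem_powers_iff _ _).mp (mem_powers_iff_mem_zpowers.mpr (hg (Units.mk0 x hx)))
  have hx' : x = (g : ZMod p) ^ k := by rw [← Units.val_pow_eq_pow_val, hk, Units.val_mk0]
  rw [hx', map_pow, cubicChar_ringHomComp_generator hp hζ] at h
  obtain ⟨m, rfl⟩ := hζ.dvd_of_pow_eq_one k h
  exact ⟨(g : ZMod p) ^ m, by rw [hx', ← pow_mul, mul_comm]⟩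

lemma jacobiSum_cubicChar_ringHomComp (hζ : IsPrimitiveRoot ζ 3) {a b : ℤ}
    (hJ : jacobiSum (cubicChar p hp) (cubicChar p hp) = a + b * θ) :
    jacobiSum ((cubicChar p hp).ringHomComp (lift hζ)) ((cubicChar p hp).ringHomComp (lift hζ)) =
      a + b * ζ := by
  rw [jacobiSum_ringHomComp, hJ]
  simp

end CubicChar

namespace Complex

noncomputable def primCubeRoot : ℂ := ⟨-1 / 2, √3 / 2⟩

local notation "ω" => primCubeRoot

lemma primCubeRoot_sq_add_self_add_one : ω ^ 2 + ω + 1 = 0 := by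
  have h3 : √3 * √3 = 3 := Real.mul_self_sqrt (by norm_num)
  apply Complex.ext
  · simp only [primCubeRoot, sq, add_re, mul_re, one_re, zero_re]
    linear_combination -h3 / 4
  · simp only [primCubeRoot, sq, add_im, mul_im, one_im, add_zero, zero_im]
    ring

lemma isPrimitiveRoot_primCubeRoot : IsPrimitiveRoot ω 3 := by
  rw [← isRoot_cyclotomic_iff, cyclotomic_three]
  simpa using primCubeRoot_sq_add_self_add_one

lemma normSq_intCast_add_mul_primCubeRoot (a b : ℤ) :
    normSq (a + b * ω) = a ^ 2 - a * b + b ^ 2 := by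
  have h3 : √3 * √3 = 3 := Real.mul_self_sqrt (by norm_num)
  simp only [primCubeRoot, normSq_apply, add_re, intCast_re, mul_re, intCast_im, zero_mul,
    sub_zero, add_im, mul_im, add_zero, zero_add]
  linear_combination (b : ℝ) ^ 2 / 4 * h3

lemma im_intCast_add_mul_primCubeRoot (a b : ℤ) : (a + b * ω).im = b * (√3 / 2) := by
  simp [primCubeRoot]

lemma normSq_jacobiSum {F : Type*} [Field F] [Fintype F] {χ φ : MulChar F ℂ} (hχ : χ ≠ 1)
    (hφ : φ ≠ 1) (hχφ : χ * φ ≠ 1) : normSq (jacobiSum χ φ) = Fintype.card F := by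
  have hchar : ringChar ℂ ≠ ringChar F := by
    rw [ringChar.eq_zero]
    exact (CharP.char_ne_zero_of_finite F (ringChar F)).symm
  have h := jacobiSum_mul_jacobiSum_inv hchar hχ hφ hχφ
  rw [← MulChar.star_eq_inv, ← MulChar.star_eq_inv] at h
  have hstar : jacobiSum (star χ) (star φ) = (starRingEnd ℂ) (jacobiSum χ φ) :=
    jacobiSum_ringHomComp χ φ (starRingEnd ℂ)
  rw [hstar, mul_conj] at h
  exact_mod_cast h

lemma three_dvd_of_jacobiSum_eq {F : Type*} [Field F] [Fintype F] {χ : MulChar F ℂ}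
    (hχ : χ ^ 3 = 1) (hF : 3 ∣ Fintype.card F - 1) {a b : ℤ}
    (hJ : jacobiSum χ χ = a + b * ω) : 3 ∣ b := by
  obtain ⟨z, hz, hJz⟩ :=
    exists_jacobiSum_eq_neg_one_add (by norm_num) hχ hχ hF isPrimitiveRoot_primCubeRoot
  obtain ⟨c, d, rfl⟩ := exists_eq_intCast_add_mul_of_mem_adjoin isPrimitiveRoot_primCubeRoot hz
  have h : (a + b * ω : ℂ) = ((3 * d - 1 : ℤ) : ℂ) + ((3 * (d - c) : ℤ) : ℂ) * ω := by
    rw [← hJ, hJz]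
    push_cast
    linear_combination (c + d * (ω - 3)) * primCubeRoot_sq_add_self_add_one
  have him := congrArg im h
  rw [im_intCast_add_mul_primCubeRoot, im_intCast_add_mul_primCubeRoot] at him
  have hb : (b : ℝ) = (3 * (d - c) : ℤ) := mul_right_cancel₀ (by positivity) him
  exact ⟨d - c, by exact_mod_cast hb⟩

end Complex

lemma pow_eq_self_of_pow_eq_pow {M : Type*} [MonoidWithZero M] [IsCancelMulZero M] {x a : M}
    {n m : ℕ} (hm : 1 ≤ m) (hnm : n ∣ m - 1) (hx : x ^ n = a ^ n) (ha : a ^ m = a) (ha0 : a ≠ 0) :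
    x ^ m = x := by
  obtain ⟨k, hk⟩ := hnm
  have ha1 : a ^ (m - 1) = 1 := by
    rw [← mul_eq_right₀ ha0, ← pow_succ, Nat.sub_add_cancel hm, ha]
  calc x ^ m = (x ^ n) ^ k * x := by rw [← pow_mul, ← hk, ← pow_succ, Nat.sub_add_cancel hm]
    _ = x := by rw [hx, ← pow_mul, ← hk, ha1, one_mul]

lemma Nat.Prime.sq_mod_three {q : ℕ} (hq : q.Prime) (hq3 : q ≠ 3) : q ^ 2 % 3 = 1 := by
  have h3 : ¬ 3 ∣ q := fun h => hq3 ((Nat.prime_dvd_prime_iff_eq Nat.prime_three hq).mp h).symm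
  rw [Nat.pow_mod]
  rcases (by omega : q % 3 = 1 ∨ q % 3 = 2) with h | h <;> rw [h]

section GaussSumCharP

variable {K F : Type*} [Field K] [Fintype K] [Field F] {q : ℕ} [Fact q.Prime] [CharP F q]

lemma gaussSum_pow_char_pow (χ : MulChar K F) (ψ : AddChar K F) (n : ℕ) :
    gaussSum χ ψ ^ q ^ n = gaussSum (χ ^ q ^ n) (ψ ^ q ^ n) := by
  induction n with
  | zero => simp
  | succ n ih => rw [pow_succ, pow_mul, ih, gaussSum_frob q, ← pow_mul, ← pow_mul]

lemma MulChar.apply_char_pow_eq_one_of_gaussSum_pow_eq (hq : IsUnit (q : K))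
    {χ : MulChar K F} {ψ : AddChar K F} {n : ℕ} (hχ : χ ^ q ^ n = χ)
    (hg : gaussSum χ ψ ^ q ^ n = gaussSum χ ψ) (hg0 : gaussSum χ ψ ≠ 0) :
    χ (q ^ n) = 1 := by
  have hshift := gaussSum_mulShift χ ψ (hq.unit ^ n)
  rw [Units.val_pow_eq_pow_val, IsUnit.unit_spec, ← Nat.cast_pow, ← AddChar.pow_mulShift, ← hχ,
    ← gaussSum_pow_char_pow, hχ, hg] at hshift
  rw [← Nat.cast_pow]
  exact (mul_eq_right₀ hg0).mp hshift

theorem MulChar.apply_char_eq_one_of_jacobiSum_eq {χ : MulChar K F} (hχ : orderOf χ = 3)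
    (hq3 : q ≠ 3) (hq : IsUnit (q : K)) {ψ : AddChar K F} (hψ : ψ.IsPrimitive) {a : F}
    (hJ : jacobiSum χ χ = a) (hK : (Fintype.card K : F) = a ^ 2) (ha : a ^ q = a) (ha0 : a ≠ 0) :
    χ q = 1 := by
  have hχ1 : χ ≠ 1 := fun h => by simp [h] at hχ
  have hχ3 : χ ^ 3 = 1 := hχ ▸ pow_orderOf_eq_one χ
  have hg0 : gaussSum χ ψ ≠ 0 :=
    gaussSum_ne_zero_of_nontrivial (by rw [hK]; exact pow_ne_zero 2 ha0) hχ1 hψ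
  have hg3 : gaussSum χ ψ ^ 3 = a ^ 3 := by
    have h := gaussSum_pow_eq_prod_jacobiSum (hχ.symm ▸ (by norm_num : 2 ≤ 3)) hψ
    rw [hχ, MulChar.val_neg_one_eq_one_of_odd_order (by decide) hχ3, hK,
      show 3 - 1 = 1 + 1 from rfl, Nat.Ico_succ_singleton, Finset.prod_singleton, pow_one, hJ] at h
    rw [h]
    ring
  have hmod : q ^ 2 % 3 = 1 := Nat.Prime.sq_mod_three Fact.out hq3
  have hχq2 : χ ^ q ^ 2 = χ := by
    conv_rhs => rw [← pow_one χ]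
    rw [pow_eq_pow_iff_modEq, hχ]
    exact hmod
  have hgq2 : gaussSum χ ψ ^ q ^ 2 = gaussSum χ ψ :=
    pow_eq_self_of_pow_eq_pow (by omega) (by omega) hg3 (by rw [pow_two, pow_mul, ha, ha]) ha0
  have hsq : χ q ^ 2 = 1 := by
    rw [← map_pow]
    exact MulChar.apply_char_pow_eq_one_of_gaussSum_pow_eq hq hχq2 hgq2 hg0
  have hcube : χ q ^ 3 = 1 := by
    rw [← MulChar.pow_apply' χ three_ne_zero, hχ3, MulChar.one_apply hq]
  linear_combination hcube - χ q * hsq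

end GaussSumCharP

section JacobiSumCubicChar

open Complex

variable {p : ℕ} [Fact p.Prime] (hp : 3 ∣ p - 1) {a b : ℤ}

lemma natCast_eq_of_jacobiSum_cubicChar_eq
    (hJ : jacobiSum (cubicChar p hp) (cubicChar p hp) = a + b * θ) :
    (p : ℤ) = a ^ 2 - a * b + b ^ 2 := by
  set χ := (cubicChar p hp).ringHomComp (lift isPrimitiveRoot_primCubeRoot)
  have hχ : orderOf χ = 3 := orderOf_cubicChar_ringHomComp hp isPrimitiveRoot_primCubeRoot
  have hχ1 : χ ≠ 1 := fun h => by simp [h] at hχ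
  have hχ2 : χ * χ ≠ 1 := by
    rw [← sq]
    exact pow_ne_one_of_lt_orderOf two_ne_zero (by omega)
  have h := normSq_jacobiSum hχ1 hχ1 hχ2
  rw [jacobiSum_cubicChar_ringHomComp hp _ hJ, normSq_intCast_add_mul_primCubeRoot, ZMod.card] at h
  exact_mod_cast h.symm

lemma three_dvd_of_jacobiSum_cubicChar_eq
    (hJ : jacobiSum (cubicChar p hp) (cubicChar p hp) = a + b * θ) : 3 ∣ b :=
  three_dvd_of_jacobiSum_eq
    (orderOf_dvd_iff_pow_eq_one.mp
      (orderOf_cubicChar_ringHomComp hp isPrimitiveRoot_primCubeRoot).dvd)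
    (by rwa [ZMod.card]) (jacobiSum_cubicChar_ringHomComp hp isPrimitiveRoot_primCubeRoot hJ)

lemma exists_pow_three_eq_of_jacobiSum_cubicChar_eq
    (hJ : jacobiSum (cubicChar p hp) (cubicChar p hp) = a + b * θ) {q : ℕ} (hq : q.Prime)
    (hq3 : q ≠ 3) (hqp : q ≠ p) (hqb : (q : ℤ) ∣ b) (hqa : ¬ (q : ℤ) ∣ a)
    (hnorm : (p : ℤ) = a ^ 2 - a * b + b ^ 2) :
    ∃ y : ZMod p, y ^ 3 = q := by
  have : Fact q.Prime := ⟨hq⟩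
  let F := AlgebraicClosure (ZMod q)
  have : NeZero (3 : ZMod q) :=
    NeZero.of_not_dvd _ fun h => hq3 ((Nat.prime_dvd_prime_iff_eq hq Nat.prime_three).mp h)
  have : NeZero (p : ZMod q) :=
    NeZero.of_not_dvd _ fun h => hqp ((Nat.prime_dvd_prime_iff_eq hq Fact.out).mp h)
  obtain ⟨ζ, hζ⟩ := HasEnoughRootsOfUnity.exists_primitiveRoot F 3
  obtain ⟨η, hη⟩ := HasEnoughRootsOfUnity.exists_primitiveRoot F p
  have hbF : (b : F) = 0 := (CharP.intCast_eq_zero_iff F q b).mpr hqb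
  have haF : (a : F) ≠ 0 := fun h => hqa ((CharP.intCast_eq_zero_iff F q a).mp h)
  have hpa : ((p : ℤ) : F) = (a : F) ^ 2 := by
    rw [hnorm, Int.cast_add, Int.cast_sub, Int.cast_mul, Int.cast_pow, Int.cast_pow, hbF]
    ring
  have hqp' : IsUnit (q : ZMod p) :=
    (ZMod.isUnit_iff_coprime q p).mpr ((Nat.coprime_primes hq Fact.out).mpr hqp)
  have hχq := MulChar.apply_char_eq_one_of_jacobiSum_eq (orderOf_cubicChar_ringHomComp hp hζ) hq3
    hqp' (AddChar.zmodChar_primitive_of_primitive_root p hη)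
    (by rw [jacobiSum_cubicChar_ringHomComp hp hζ hJ, hbF, zero_mul, add_zero])
    (by rw [ZMod.card]; exact_mod_cast hpa) (by rw [← frobenius_def, map_intCast]) haF
  exact exists_pow_three_eq_of_cubicChar_ringHomComp_eq_one hp hζ hqp'.ne_zero hχq

end JacobiSumCubicChar

theorem cubic_residue_of_dvd_M_general (p : ℕ) (hp : p.Prime) (hp3 : p % 3 = 1)
    (L M : ℤ) (hLM : 4 * (p : ℤ) = L ^ 2 + 27 * M ^ 2)
    (q : ℕ) (hq : q.Prime) (hq3 : q ≠ 3) (hqp : q ≠ p)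
    (hdvd : (q : ℤ) ∣ M) :
    ∃ x : ℤ, x ^ 3 ≡ (q : ℤ) [ZMOD (p : ℤ)] := by
  have : Fact p.Prime := ⟨hp⟩
  have hp1 : 3 ∣ p - 1 := by omega
  obtain ⟨a, b, hJ⟩ :=
    exists_eq_intCast_add_mul_root (jacobiSum (cubicChar p hp1) (cubicChar p hp1))
  have hnorm := natCast_eq_of_jacobiSum_cubicChar_eq hp1 hJ
  obtain ⟨c, rfl⟩ := three_dvd_of_jacobiSum_cubicChar_eq hp1 hJ
  have hMc : M ^ 2 = c ^ 2 := sq_eq_sq_of_four_mul_eq_sq_add_27_mul_sq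
    (Nat.prime_iff_prime_int.mp hp) hLM (C := 2 * a - 3 * c) (by linear_combination 4 * hnorm)
  have hqc : (q : ℤ) ∣ c :=
    (Nat.prime_iff_prime_int.mp hq).dvd_of_dvd_pow (n := 2) (hMc ▸ dvd_pow hdvd two_ne_zero)
  have hqb : (q : ℤ) ∣ 3 * c := dvd_mul_of_dvd_right hqc 3
  have hqa : ¬ (q : ℤ) ∣ a := by
    intro hqa
    have hqp' : (q : ℤ) ∣ p := by
      rw [hnorm]
      exact dvd_add (dvd_sub (dvd_pow hqa two_ne_zero) (dvd_mul_of_dvd_left hqa _))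
        (dvd_pow hqb two_ne_zero)
    exact hqp ((Nat.prime_dvd_prime_iff_eq hq hp).mp (Int.natCast_dvd_natCast.mp hqp'))
  obtain ⟨y, hy⟩ := exists_pow_three_eq_of_jacobiSum_cubicChar_eq hp1 hJ hq hq3 hqp hqb hqa hnorm
  obtain ⟨x, rfl⟩ := ZMod.intCast_surjective y
  exact ⟨x, (ZMod.intCast_eq_intCast_iff _ _ p).mp (by push_cast; exact hy)⟩

/-- If p ≡ 1 (mod 3) is prime, 4p = L² + 27M², and q ∉ {2,3,p} is a prime dividing M,
then q is a cubic residue modulo p. -/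
theorem cubic_residue_of_dvd_M (p : ℕ) (hp : p.Prime) (hp3 : p % 3 = 1)
    (L M : ℤ) (hLM : 4 * (p : ℤ) = L ^ 2 + 27 * M ^ 2)
    (q : ℕ) (hq : q.Prime) (hq2 : q ≠ 2) (hq3 : q ≠ 3) (hqp : q ≠ p)
    (hdvd : (q : ℤ) ∣ M) :
    ∃ x : ℤ, x ^ 3 ≡ (q : ℤ) [ZMOD (p : ℤ)] :=
  cubic_residue_of_dvd_M_general p hp hp3 L M hLM q hq hq3 hqp hdvd
end

section
/- For every prime p with p ≡ 1 (mod 3) and p > 7, there exists a prime q with q < 2·p^{1/2} such that q is a cubic residue modulo p. -/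
/-!
Let `χ` be a cubic character mod `p` and `J = J(χ, χ) = a + b ω` its Jacobi sum, so that
`a² - ab + b² = p` and `4p = (2a - b)² + 3b²`. If a prime `q ≠ 3` divides `b` or `2a - b`,
then `J ≡ ±J̄ (mod q)`, so `J⁴ ≡ p²`. Since `g(χ)³ = pJ`, this pins down the action of
the Frobenius `x ↦ x ^ q` on the Gauss sum `g(χ)` in characteristic `q`, and comparing with
`g(χ) ^ q = χ(q) ^ (-q) g(χ ^ q)` gives `χ(q) = 1`: `q` is a cube mod `p`. Such a `q` with
`q² < 4p` exists unless `2a - b = ±1` and `b = ±3 ^ j`; then `3 ^ (2j + 1) ≡ -1 (mod p)` makes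
`3` a cube, because `3 ∣ 2j + 1` would force `7 ∣ p`.
-/

open Multiplicative

section ZPowersIndex

variable {G : Type*} [Group G] {g : G} (hg : ∀ x, x ∈ Subgroup.zpowers g) {n : ℕ}
  (hn : n ∣ orderOf g)

noncomputable def zpowersIndex : G →* Multiplicative (ZMod n) :=
  monoidHomOfForallMemZpowers hg (g' := ofAdd 1) (by
    rwa [orderOf_ofAdd_eq_addOrderOf, ZMod.addOrderOf_one])

lemma zpowersIndex_zpow (k : ℤ) : zpowersIndex hg hn (g ^ k) = ofAdd (k : ZMod n) := by
  rw [map_zpow, zpowersIndex, monoidHomOfForallMemZpowers_apply_gen, ← ofAdd_zsmul,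
    zsmul_one]

lemma zpowersIndex_surjective : Function.Surjective (zpowersIndex hg hn) := fun j ↦ by
  obtain ⟨k, hk⟩ := ZMod.intCast_surjective (toAdd j)
  exact ⟨g ^ k, by rw [zpowersIndex_zpow, hk, ofAdd_toAdd]⟩

lemma zpowersIndex_eq_one_iff (x : G) : zpowersIndex hg hn x = 1 ↔ ∃ y, y ^ n = x := by
  obtain ⟨k, rfl⟩ := Subgroup.mem_zpowers_iff.mp (hg x)
  constructor
  · intro h
    rw [zpowersIndex_zpow, ofAdd_eq_one, ZMod.intCast_zmod_eq_zero_iff_dvd] at h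
    obtain ⟨m, rfl⟩ := h
    exact ⟨g ^ m, by rw [← zpow_natCast, ← zpow_mul, mul_comm]⟩
  · rintro ⟨y, hy⟩
    rw [← hy, map_pow, ← ofAdd_toAdd (zpowersIndex hg hn y), ← ofAdd_nsmul, nsmul_eq_mul,
      ZMod.natCast_self, zero_mul, ofAdd_zero]

end ZPowersIndex

section GaussSum

variable {F K : Type*} [Field F] [Fintype F] [Field K]

lemma gaussSum_pow_three_eq {χ : MulChar F K} (hχ : orderOf χ = 3) {ψ : AddChar F K}
    (hψ : ψ.IsPrimitive) : gaussSum χ ψ ^ 3 = Fintype.card F * jacobiSum χ χ := by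
  have h := gaussSum_pow_eq_prod_jacobiSum (by rw [hχ]; norm_num) hψ
  rwa [hχ, MulChar.val_neg_one_eq_one_of_odd_order (by decide) (hχ ▸ pow_orderOf_eq_one χ),
    one_mul, show Finset.Ico 1 (3 - 1) = {1} by rfl, Finset.prod_singleton, pow_one] at h

lemma MulChar.apply_pow_orderOf_eq_one (χ : MulChar F K) {a : F} (ha : a ≠ 0) :
    χ a ^ orderOf χ = 1 := by
  rw [← χ.pow_apply' χ.orderOf_pos.ne', pow_orderOf_eq_one, MulChar.one_apply ha.isUnit]

variable (q : ℕ) [Fact q.Prime] [CharP K q]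

lemma natCast_pow_char (n : ℕ) : (n : K) ^ q = n := by
  rw [← frobenius_def, map_natCast]

lemma apply_pow_char_mul_gaussSum_pow_char (hq : (q : F) ≠ 0) (χ : MulChar F K)
    (ψ : AddChar F K) : χ q ^ q * gaussSum χ ψ ^ q = gaussSum (χ ^ q) ψ := by
  rw [gaussSum_frob, AddChar.pow_mulShift, ← gaussSum_mulShift (χ ^ q) ψ (Units.mk0 _ hq),
    Units.val_mk0, MulChar.pow_apply' χ (Fact.out : q.Prime).ne_zero]

variable {q} (hq : (q : F) ≠ 0) {χ : MulChar F K} (hχ : orderOf χ = 3)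
include hq hχ

lemma apply_pow_mod_three_mul_gaussSum_pow_char (ψ : AddChar F K) :
    χ q ^ (q % 3) * gaussSum χ ψ ^ q = gaussSum (χ ^ (q % 3)) ψ := by
  have hχ3 : χ ^ 3 = 1 := hχ ▸ pow_orderOf_eq_one χ
  have hc3 : χ q ^ 3 = 1 := hχ ▸ χ.apply_pow_orderOf_eq_one hq
  rw [← pow_eq_pow_mod q hc3, ← pow_eq_pow_mod q hχ3]
  exact apply_pow_char_mul_gaussSum_pow_char q hq χ ψ

lemma apply_char_sq_mul_gaussSum_pow_char_add_one {ψ : AddChar F K} (hψ : ψ.IsPrimitive)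
    (hq2 : q % 3 = 2) : χ q ^ 2 * gaussSum χ ψ ^ (q + 1) = Fintype.card F := by
  have hχ3 : χ ^ 3 = 1 := hχ ▸ pow_orderOf_eq_one χ
  have hinv : χ ^ 2 = χ⁻¹ := eq_inv_of_mul_eq_one_left (by rw [← pow_succ, hχ3])
  have hinv1 : χ⁻¹ (-1) = 1 :=
    MulChar.val_neg_one_eq_one_of_odd_order (n := 3) (by decide) (by rw [inv_pow, hχ3, inv_one])
  have hfrob := apply_pow_mod_three_mul_gaussSum_pow_char hq hχ ψ
  rw [hq2, hinv, ← mul_gaussSum_inv_eq_gaussSum χ⁻¹ ψ, hinv1, one_mul] at hfrob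
  rw [pow_succ (gaussSum χ ψ) q, ← mul_assoc, hfrob, mul_comm]
  exact gaussSum_mul_gaussSum_eq_card (by rintro rfl; simp at hχ) hψ

/-- By `gaussSum_pow_three_eq` the hypothesis gives `g ^ 12 = #F ^ 6`, which turns the two
Frobenius relations into `χ q ^ 8 = 1`. -/
lemma apply_char_eq_one_of_jacobiSum_pow_four (hq3 : q ≠ 3) (hF : (Fintype.card F : K) ≠ 0)
    {ψ : AddChar F K} (hψ : ψ.IsPrimitive)
    (hJ : jacobiSum χ χ ^ 4 = (Fintype.card F : K) ^ 2) : χ q = 1 := by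
  set g := gaussSum χ ψ
  set P : K := (Fintype.card F : K)
  have hg : g ≠ 0 := gaussSum_ne_zero_of_nontrivial hF (by rintro rfl; simp at hχ) hψ
  have hg12 (m : ℕ) : g ^ (12 * m) = P ^ (6 * m) := by
    rw [pow_mul, show 12 = 3 * 4 by rfl, pow_mul, gaussSum_pow_three_eq hχ hψ, mul_pow, hJ,
      ← pow_add, ← pow_mul]
  have hP : P ^ q = P := natCast_pow_char q _
  have hq0 : q ≠ 0 := (Fact.out : q.Prime).ne_zero
  suffices χ q ^ 8 = 1 by
    have hc3 : χ q ^ 3 = 1 := hχ ▸ χ.apply_pow_orderOf_eq_one hq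
    simpa using pow_gcd_eq_one.mpr ⟨hc3, this⟩
  have : q % 3 = 1 ∨ q % 3 = 2 := by
    have := (Nat.prime_dvd_prime_iff_eq Nat.prime_three Fact.out).not.mpr (Ne.symm hq3)
    omega
  rcases this with h | h
  · obtain ⟨m, hm⟩ : 3 ∣ q - 1 := by omega
    have hfrob := apply_pow_mod_three_mul_gaussSum_pow_char hq hχ ψ
    rw [h, pow_one, pow_one, ← pow_sub_one_mul hq0, ← mul_assoc] at hfrob
    have hcg : χ q * g ^ (q - 1) = 1 := mul_right_cancel₀ hg (hfrob.trans (one_mul g).symm)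
    have hP1 : P ^ (q - 1) = 1 :=
      mul_right_cancel₀ hF (by rw [pow_sub_one_mul hq0, hP, one_mul])
    refine mul_right_cancel₀ (pow_ne_zero (12 * (2 * m)) hg) ?_
    calc χ q ^ 8 * g ^ (12 * (2 * m)) = (χ q * g ^ (q - 1)) ^ 8 := by
          rw [mul_pow, ← pow_mul, hm]; ring_nf
      _ = 1 * g ^ (12 * (2 * m)) := by
          rw [hcg, hg12, show 6 * (2 * m) = (q - 1) * 4 by omega, pow_mul, hP1]; simp
  · obtain ⟨m, hm⟩ : 3 ∣ q + 1 := by omega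
    refine mul_right_cancel₀ (pow_ne_zero (12 * m) hg) ?_
    calc χ q ^ 8 * g ^ (12 * m) = (χ q ^ 2 * g ^ (q + 1)) ^ 4 := by
          rw [mul_pow, ← pow_mul, ← pow_mul, hm]; ring_nf
      _ = 1 * g ^ (12 * m) := by
          rw [apply_char_sq_mul_gaussSum_pow_char_add_one hq hχ hψ h, hg12,
            show 6 * m = (q + 1) * 2 by omega, pow_mul, pow_succ P q, hP]
          ring

end GaussSum

lemma IsPrimitiveRoot.sq_add_self_add_one {R : Type*} [CommRing R] [IsDomain R] {ζ : R}
    (hζ : IsPrimitiveRoot ζ 3) : ζ ^ 2 + ζ + 1 = 0 := by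
  have := hζ.geom_sum_eq_zero (by norm_num)
  simp only [Finset.sum_range_succ, Finset.sum_range_zero] at this
  linear_combination this

lemma intCast_add_mul_pow_four_eq_sq {R : Type*} [CommRing R] {ζ : R} (hζ : ζ ^ 2 + ζ + 1 = 0)
    {a b : ℤ} {n : ℕ} (hn : a ^ 2 - a * b + b ^ 2 = n)
    (h : (b : R) = 0 ∨ ((2 * a - b : ℤ) : R) = 0) : ((a : R) + b * ζ) ^ 4 = (n : R) ^ 2 := by
  have hnR : (a : R) ^ 2 - a * b + b ^ 2 = n := by exact_mod_cast congrArg (Int.cast : ℤ → R) hn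
  have hsq : ((a : R) + b * ζ) ^ 2 = n ∨ ((a : R) + b * ζ) ^ 2 = -n := by
    push_cast at h
    rcases h with h | h
    · exact .inl (by linear_combination (2 * a * ζ + b * ζ ^ 2 + a - b : R) * h + hnR)
    · exact .inr (by linear_combination (a + b * ζ : R) * h + (b : R) ^ 2 * hζ - hnR)
  rw [show 4 = 2 * 2 by rfl, pow_mul]
  rcases hsq with h | h <;> rw [h]
  ring

namespace Nat

lemma sq_lt_four_mul_of_dvd {p B C r : ℕ} (h : C ^ 2 + 3 * B ^ 2 = 4 * p) (hB : B ≠ 0)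
    (hC : C ≠ 0) (hr : r ∣ B ∨ r ∣ C) : r ^ 2 < 4 * p := by
  rcases hr with hr | hr
  · have := Nat.le_of_dvd (Nat.pos_of_ne_zero hB) hr
    nlinarith [Nat.pos_of_ne_zero hC]
  · have := Nat.le_of_dvd (Nat.pos_of_ne_zero hC) hr
    nlinarith [Nat.pos_of_ne_zero hB]

lemma exists_four_mul_eq_one_add_three_pow {p B C : ℕ} (h : C ^ 2 + 3 * B ^ 2 = 4 * p)
    (hp3 : p % 3 = 1) (hB : B ≠ 0) (hBC : ∀ r, r.Prime → r ∣ B ∨ r ∣ C → r = 3) :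
    ∃ j, 4 * p = 1 + 3 ^ (2 * j + 1) := by
  have hC : C = 1 := Nat.eq_one_iff_not_exists_prime_dvd.mpr fun r hr hrC ↦ by
    obtain ⟨k, rfl⟩ := hBC r hr (.inr hrC) ▸ hrC
    have : 3 ∣ 4 * p := ⟨3 * k ^ 2 + B ^ 2, by rw [← h]; ring⟩
    omega
  obtain ⟨j, rfl⟩ : ∃ j, B = 3 ^ j :=
    ⟨_, Nat.eq_prime_pow_of_unique_prime_dvd hB fun hr hrB ↦ hBC _ hr (.inl hrB)⟩
  exact ⟨j, by rw [← h, hC]; ring⟩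

end Nat

abbrev CubicGroupRing := MonoidAlgebra ℤ (Multiplicative (ZMod 3))

namespace CubicGroupRing

variable {K : Type*} [CommRing K] {ζ : K}

noncomputable def eval (hζ : ζ ^ 3 = 1) : CubicGroupRing →+* K :=
  (MonoidAlgebra.lift ℤ K _ (AddChar.zmodChar 3 hζ).toMonoidHom).toRingHom

lemma eval_of (hζ : ζ ^ 3 = 1) (j : Multiplicative (ZMod 3)) :
    eval hζ (MonoidAlgebra.of ℤ _ j) = ζ ^ (toAdd j).val := by
  simp [eval, AddChar.zmodChar_apply]

lemma eval_eq [IsDomain K] (hζ : IsPrimitiveRoot ζ 3) (x : CubicGroupRing) :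
    eval hζ.pow_eq_one x = ((x.coeff (ofAdd 0) - x.coeff (ofAdd 2) : ℤ) : K) +
      ((x.coeff (ofAdd 1) - x.coeff (ofAdd 2) : ℤ) : K) * ζ := by
  rw [eval, AlgHom.toRingHom_eq_coe, RingHom.coe_coe, MonoidAlgebra.lift_apply,
    Finsupp.sum_fintype _ _ (by simp), ← ofAdd.sum_comp]
  simp only [AddChar.toMonoidHom_apply, AddChar.zmodChar_apply, toAdd_ofAdd, zsmul_eq_mul]
  rw [show (Finset.univ : Finset (ZMod 3)) = {0, 1, 2} by decide, Finset.sum_insert (by decide),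
    Finset.sum_insert (by decide), Finset.sum_singleton, show (0 : ZMod 3).val = 0 from rfl,
    show (1 : ZMod 3).val = 1 from rfl, show (2 : ZMod 3).val = 2 from rfl]
  push_cast
  linear_combination (x.coeff (ofAdd 2) : K) * hζ.sq_add_self_add_one

end CubicGroupRing

namespace ZMod

variable (p : ℕ) [Fact p.Prime]

lemma three_dvd_orderOf_of_forall_mem_zpowers (hp : p % 3 = 1) {g : (ZMod p)ˣ}
    (hg : ∀ x, x ∈ Subgroup.zpowers g) : 3 ∣ orderOf g := by
  rw [orderOf_eq_card_of_forall_mem_zpowers hg, Nat.card_eq_fintype_card, ZMod.card_units]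
  omega

noncomputable def cubicIndex (hp : p % 3 = 1) : (ZMod p)ˣ →* Multiplicative (ZMod 3) :=
  zpowersIndex IsCyclic.exists_generator.choose_spec
    (three_dvd_orderOf_of_forall_mem_zpowers p hp IsCyclic.exists_generator.choose_spec)

/-- The cubic character with values in the group ring `ℤ[C₃]`. Its specializations
`cubicCharAt` at cube roots of unity `ζ` have Jacobi sums that are images of one element of
`ℤ[C₃]`, hence share the integer coordinates `cubicJacobiA`, `cubicJacobiB`. -/
noncomputable def cubicChar (hp : p % 3 = 1) : MulChar (ZMod p) CubicGroupRing :=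
  MulChar.ofUnitHom ((MonoidAlgebra.of ℤ _).comp (cubicIndex p hp)).toHomUnits

noncomputable def cubicCharAt (hp : p % 3 = 1) {K : Type*} [CommRing K] {ζ : K}
    (hζ : ζ ^ 3 = 1) : MulChar (ZMod p) K :=
  (cubicChar p hp).ringHomComp (CubicGroupRing.eval hζ)

noncomputable def cubicJacobiA (hp : p % 3 = 1) : ℤ :=
  (jacobiSum (cubicChar p hp) (cubicChar p hp)).coeff (ofAdd 0) -
    (jacobiSum (cubicChar p hp) (cubicChar p hp)).coeff (ofAdd 2)

noncomputable def cubicJacobiB (hp : p % 3 = 1) : ℤ :=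
  (jacobiSum (cubicChar p hp) (cubicChar p hp)).coeff (ofAdd 1) -
    (jacobiSum (cubicChar p hp) (cubicChar p hp)).coeff (ofAdd 2)

variable {p} (hp : p % 3 = 1)

lemma cubicIndex_surjective : Function.Surjective (cubicIndex p hp) :=
  zpowersIndex_surjective _ _

lemma cubicIndex_eq_one_iff (u : (ZMod p)ˣ) : cubicIndex p hp u = 1 ↔ ∃ v, v ^ 3 = u :=
  zpowersIndex_eq_one_iff _ _ u

variable {K : Type*} [Field K] {ζ : K}

lemma cubicCharAt_coe (hζ : ζ ^ 3 = 1) (u : (ZMod p)ˣ) :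
    cubicCharAt p hp hζ u = ζ ^ (toAdd (cubicIndex p hp u)).val := by
  rw [cubicCharAt, MulChar.ringHomComp_apply, cubicChar, MulChar.ofUnitHom_coe,
    MonoidHom.coe_toHomUnits, MonoidHom.comp_apply, CubicGroupRing.eval_of]

lemma cubicCharAt_eq_one_iff (hζ : IsPrimitiveRoot ζ 3) (u : (ZMod p)ˣ) :
    cubicCharAt p hp hζ.pow_eq_one u = 1 ↔ ∃ v, v ^ 3 = u := by
  rw [cubicCharAt_coe, hζ.pow_eq_one_iff_dvd, ← ZMod.natCast_eq_zero_iff, ZMod.natCast_val,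
    ZMod.cast_id', id, ← ofAdd_eq_one, ofAdd_toAdd]
  exact cubicIndex_eq_one_iff hp u

lemma cubicCharAt_pow_three (hζ : ζ ^ 3 = 1) : cubicCharAt p hp hζ ^ 3 = 1 := by
  ext u
  rw [MulChar.pow_apply_coe, cubicCharAt_coe, MulChar.one_apply_coe, ← pow_mul, mul_comm,
    pow_mul, hζ, one_pow]

lemma orderOf_cubicCharAt (hζ : IsPrimitiveRoot ζ 3) :
    orderOf (cubicCharAt p hp hζ.pow_eq_one) = 3 := by
  have : Fact (Nat.Prime 3) := ⟨Nat.prime_three⟩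
  refine orderOf_eq_prime (cubicCharAt_pow_three hp _) fun h ↦ ?_
  obtain ⟨u, hu⟩ := cubicIndex_surjective hp (ofAdd 1)
  have := congrArg (· (u : ZMod p)) h
  rw [MulChar.one_apply_coe, cubicCharAt_coe, hu, toAdd_ofAdd, ZMod.val_one, pow_one] at this
  exact hζ.ne_one (by norm_num) this

lemma cubicCharAt_inv (hζ : IsPrimitiveRoot ζ 3) :
    (cubicCharAt p hp hζ.pow_eq_one)⁻¹ =
      cubicCharAt p hp (hζ.pow_of_coprime 2 (by norm_num)).pow_eq_one := by
  ext u
  rw [MulChar.inv_apply_eq_inv', cubicCharAt_coe, cubicCharAt_coe, ← pow_mul]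
  refine inv_eq_of_mul_eq_one_right ?_
  rw [← pow_add, ← one_add_mul, pow_mul, hζ.pow_eq_one, one_pow]

lemma jacobiSum_cubicCharAt (hζ : IsPrimitiveRoot ζ 3) :
    jacobiSum (cubicCharAt p hp hζ.pow_eq_one) (cubicCharAt p hp hζ.pow_eq_one) =
      cubicJacobiA p hp + cubicJacobiB p hp * ζ := by
  rw [cubicCharAt, jacobiSum_ringHomComp, CubicGroupRing.eval_eq hζ]
  rfl

lemma cubicJacobi_norm_eq (hK : ringChar K ≠ p) (hζ : IsPrimitiveRoot ζ 3) :
    (cubicJacobiA p hp + cubicJacobiB p hp * ζ) *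
      (cubicJacobiA p hp + cubicJacobiB p hp * ζ ^ 2) = p := by
  set χ := cubicCharAt p hp hζ.pow_eq_one
  have hχ : orderOf χ = 3 := orderOf_cubicCharAt hp hζ
  have hχ1 : χ ≠ 1 := fun h ↦ by simp [h] at hχ
  have hχ2 : χ * χ ≠ 1 := fun h ↦ by
    have := orderOf_dvd_of_pow_eq_one ((pow_two χ).trans h)
    rw [hχ] at this
    norm_num at this
  have := jacobiSum_mul_jacobiSum_inv (by rwa [ZMod.ringChar_zmod_n]) hχ1 hχ1 hχ2
  rwa [cubicCharAt_inv hp hζ, jacobiSum_cubicCharAt hp hζ,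
    jacobiSum_cubicCharAt hp (hζ.pow_of_coprime 2 (by norm_num)), ZMod.card] at this

lemma cubicJacobiA_sq_sub_mul_add_sq :
    cubicJacobiA p hp ^ 2 - cubicJacobiA p hp * cubicJacobiB p hp + cubicJacobiB p hp ^ 2 =
      p := by
  obtain ⟨ζ, hζ⟩ : ∃ ζ : ℂ, IsPrimitiveRoot ζ 3 :=
    ⟨_, Complex.isPrimitiveRoot_exp 3 (by norm_num)⟩
  have h := cubicJacobi_norm_eq hp (K := ℂ)
    (by rw [ringChar.eq_zero]; exact (Fact.out : p.Prime).ne_zero.symm) hζ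
  have h1 := hζ.sq_add_self_add_one
  set a := cubicJacobiA p hp
  set b := cubicJacobiB p hp
  exact_mod_cast (show ((a ^ 2 - a * b + b ^ 2 : ℤ) : ℂ) = ((p : ℤ) : ℂ) by
    push_cast
    linear_combination h - (a * b + b ^ 2 * (ζ - 1) : ℂ) * h1)

lemma exists_cube_eq_of_dvd_cubicJacobi {q : ℕ} (hq : q.Prime) (hq3 : q ≠ 3) (hqp : q ≠ p)
    (hdvd : (q : ℤ) ∣ cubicJacobiB p hp ∨
      (q : ℤ) ∣ 2 * cubicJacobiA p hp - cubicJacobiB p hp) :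
    ∃ x : ZMod p, x ^ 3 = q := by
  have : Fact q.Prime := ⟨hq⟩
  have : NeZero ((p : ℕ) : ZMod q) := ⟨by
    rw [Ne, ZMod.natCast_eq_zero_iff, Nat.prime_dvd_prime_iff_eq hq Fact.out]; exact hqp⟩
  have : NeZero ((3 : ℕ) : ZMod q) := ⟨by
    rw [Ne, ZMod.natCast_eq_zero_iff, Nat.prime_dvd_prime_iff_eq hq Nat.prime_three]; exact hq3⟩
  let K := AlgebraicClosure (ZMod q)
  obtain ⟨ζ, hζ⟩ := HasEnoughRootsOfUnity.exists_primitiveRoot K 3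
  obtain ⟨ξ, hξ⟩ := HasEnoughRootsOfUnity.exists_primitiveRoot K p
  have hqF : (q : ZMod p) ≠ 0 := by
    rw [Ne, ZMod.natCast_eq_zero_iff, Nat.prime_dvd_prime_iff_eq Fact.out hq]; exact hqp.symm
  have hpK : (Fintype.card (ZMod p) : K) ≠ 0 := by
    rw [ZMod.card, Ne, CharP.cast_eq_zero_iff K q, Nat.prime_dvd_prime_iff_eq hq Fact.out]
    exact hqp
  have hJ : jacobiSum (cubicCharAt p hp hζ.pow_eq_one) (cubicCharAt p hp hζ.pow_eq_one) ^ 4 =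
      (Fintype.card (ZMod p) : K) ^ 2 := by
    rw [jacobiSum_cubicCharAt hp hζ, ZMod.card]
    refine intCast_add_mul_pow_four_eq_sq hζ.sq_add_self_add_one
      (cubicJacobiA_sq_sub_mul_add_sq hp) ?_
    simpa only [CharP.intCast_eq_zero_iff K q] using hdvd
  have := apply_char_eq_one_of_jacobiSum_pow_four hqF (orderOf_cubicCharAt hp hζ) hq3 hpK
    (AddChar.zmodChar_primitive_of_primitive_root p hξ) hJ
  obtain ⟨v, hv⟩ := (cubicCharAt_eq_one_iff hp hζ (Units.mk0 _ hqF)).mp this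
  exact ⟨v, by simpa using congrArg Units.val hv⟩

lemma exists_cube_eq_three (hp7 : 7 < p) {j : ℕ} (h : 4 * p = 1 + 3 ^ (2 * j + 1)) :
    ∃ x : ZMod p, x ^ 3 = 3 := by
  have h3 : (2 * j + 1).Coprime 3 := by
    refine Nat.coprime_comm.mp ((Nat.Prime.coprime_iff_not_dvd Nat.prime_three).mpr ?_)
    rintro ⟨t, ht⟩
    -- `27 ^ t + 1` is divisible by `28` for odd `t`, so `7 ∣ p`
    have h28 : 1 + 27 ∣ 1 ^ t + 27 ^ t := Odd.nat_add_dvd_pow_add_pow 1 27 (by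
      rw [Nat.odd_iff]; omega)
    rw [one_pow, show 27 ^ t = 3 ^ (2 * j + 1) by rw [ht, pow_mul]; norm_num, ← h] at h28
    have h7 : 7 ∣ p := by omega
    have := (Nat.prime_dvd_prime_iff_eq (by norm_num) Fact.out).mp h7
    omega
  have h1 : (3 : ZMod p) ^ (2 * j + 1) = (-1) ^ 3 := by
    have := congrArg (Nat.cast : ℕ → ZMod p) h
    push_cast [ZMod.natCast_self] at this
    linear_combination -this
  obtain ⟨x, hx, -⟩ := (pow_eq_pow_iff_of_coprime h3).mp h1
  exact ⟨x, hx.symm⟩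

include hp in
theorem exists_prime_sq_lt_four_mul_and_cube_eq (hp7 : 7 < p) :
    ∃ q : ℕ, q.Prime ∧ q ^ 2 < 4 * p ∧ ∃ x : ZMod p, x ^ 3 = q := by
  set a := cubicJacobiA p hp
  set b := cubicJacobiB p hp
  have hnorm : a ^ 2 - a * b + b ^ 2 = p := cubicJacobiA_sq_sub_mul_add_sq hp
  have h4p : (2 * a - b).natAbs ^ 2 + 3 * b.natAbs ^ 2 = 4 * p := by
    zify
    simp only [sq_abs]
    linear_combination 4 * hnorm
  have hB : b.natAbs ≠ 0 := by
    intro hb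
    rw [Int.natAbs_eq_zero.mp hb] at hnorm
    have : a.natAbs ^ 2 = p := by zify; simp only [sq_abs]; linarith
    exact Nat.Prime.not_prime_pow le_rfl (this ▸ (Fact.out : p.Prime))
  have hC : (2 * a - b).natAbs ≠ 0 := by
    intro hc
    rw [hc] at h4p
    omega
  by_cases hBC : ∀ r, r.Prime → r ∣ b.natAbs ∨ r ∣ (2 * a - b).natAbs → r = 3
  · obtain ⟨j, hj⟩ := Nat.exists_four_mul_eq_one_add_three_pow h4p hp hB hBC
    exact ⟨3, Nat.prime_three, by omega, exists_cube_eq_three hp7 hj⟩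
  · push Not at hBC
    obtain ⟨r, hr, hrBC, hr3⟩ := hBC
    have hr4p := Nat.sq_lt_four_mul_of_dvd h4p hB hC hrBC
    have hrp : r ≠ p := by rintro rfl; nlinarith
    refine ⟨r, hr, hr4p, exists_cube_eq_of_dvd_cubicJacobi hp hr hr3 hrp ?_⟩
    simpa only [Int.natCast_dvd] using hrBC

end ZMod

/-- Nagell's bound: for every prime p ≡ 1 (mod 3) with p > 7, there is a prime
q < 2√p that is a cubic residue modulo p. -/
theorem nagell_small_cubic_residue (p : ℕ) (hp : p.Prime) (hp3 : p % 3 = 1) (hp7 : 7 < p) :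
    ∃ q : ℕ, q.Prime ∧ (q : ℝ) < 2 * Real.sqrt p ∧
      ∃ x : ℤ, x ^ 3 ≡ (q : ℤ) [ZMOD (p : ℤ)] := by
  have : Fact p.Prime := ⟨hp⟩
  obtain ⟨q, hq, hq4p, x, hx⟩ := ZMod.exists_prime_sq_lt_four_mul_and_cube_eq hp3 hp7
  obtain ⟨y, rfl⟩ := ZMod.intCast_surjective x
  refine ⟨q, hq, ?_, y, (ZMod.intCast_eq_intCast_iff _ _ _).mp (by push_cast; exact hx)⟩
  refine (pow_lt_pow_iff_left₀ (Nat.cast_nonneg q) (by positivity) two_ne_zero).mp ?_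
  rw [mul_pow, Real.sq_sqrt (Nat.cast_nonneg p)]
  exact_mod_cast hq4p
end

section
/- Let p be a prime with p ≡ 1 (mod 4), and let L, M be integers with p = L² + 4M². If q is an odd prime with q ≠ p and q divides M, then q* is a biquadratic residue modulo p. -/
/-!
Let `χ` be a quartic character modulo `p` with values in `ℤ[i]` and `J = J(χ, χ) = A + Bi` its
Jacobi sum. Then `A² + B² = p` and `A` is odd, so uniqueness of the representation of a prime as a
sum of two squares forces `B = ±2M`; hence `q ∣ B`. Reducing into a field `K` of characteristic
`q`, the Jacobi sum becomes the integer `A` and `p = A²`. With `g` the Gauss sum of `χ`, the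
relations `g² = J · g(χ²)` and `g(χ²)² = p` give `g⁴ = A⁴`, which pins down `g^q`; comparing with
the Frobenius `g^q = χ^q(q)⁻¹ · g(χ^q)` yields `χ(q*) = 1`, and a character of order 4 is trivial
exactly on fourth powers.
-/

theorem Int.sq_eq_sq_of_sq_add_sq_eq {p a b c d : ℤ} (hp : Prime p) (hab : a ^ 2 + b ^ 2 = p)
    (hcd : c ^ 2 + d ^ 2 = p) : a ^ 2 = d ^ 2 ∨ b ^ 2 = d ^ 2 := by
  wlog h : p ∣ a * d - b * c generalizing c
  · have hdvd : p ∣ (a * d - b * c) * (a * d + b * c) :=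
      ⟨a ^ 2 - c ^ 2, by linear_combination a ^ 2 * hcd - c ^ 2 * hab⟩
    refine this (c := -c) (by rwa [neg_sq]) ?_
    rw [mul_neg, sub_neg_eq_add]
    exact (hp.dvd_or_dvd hdvd).resolve_left h
  obtain ⟨k, hk⟩ := h
  have hp0 := hp.ne_zero
  -- Lagrange's identity `(a² + b²)(c² + d²) = (ac + bd)² + (ad - bc)²`
  have hlag : (a * c + b * d) ^ 2 + p ^ 2 * k ^ 2 = p ^ 2 := by
    linear_combination (-(p * k + a * d - b * c)) * hk + (a ^ 2 + b ^ 2) * hcd + p * hab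
  obtain rfl | hk1 : k = 0 ∨ k ^ 2 = 1 := by
    have : k ^ 2 ≤ 1 := by nlinarith [sq_nonneg (a * c + b * d), sq_pos_of_ne_zero hp0]
    have : -1 ≤ k ∧ k ≤ 1 := ⟨by nlinarith, by nlinarith⟩
    rcases (by omega : k = 0 ∨ k = 1 ∨ k = -1) with h | h | h <;> simp [h]
  · right
    refine mul_left_cancel₀ hp0 ?_
    linear_combination (p - c ^ 2) * hab + (a ^ 2 - p) * hcd - (a * d + b * c) * hk
  · left
    have hac : a * c + b * d = 0 := pow_eq_zero_iff two_ne_zero |>.mp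
      (by linear_combination hlag - p ^ 2 * hk1)
    have hd : d = a * k := mul_left_cancel₀ hp0 (by linear_combination a * hk + b * hac - d * hab)
    rw [hd, mul_pow, hk1, mul_one]

lemma orderOf_eq_four_of_sq_eq_neg_one {R : Type*} [Ring R] {x : R} (hx : x ^ 2 = -1)
    (h : (-1 : R) ≠ 1) : orderOf x = 4 :=
  orderOf_eq_prime_pow (p := 2) (n := 1) (by rwa [pow_one, hx])
    (by rw [show 2 ^ (1 + 1) = 2 * 2 by rfl, pow_mul, hx, neg_one_sq])

lemma AddChar.exists_isPrimitive_zmod (n : ℕ) [NeZero n] (K : Type*) [Field K] [IsAlgClosed K]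
    [NeZero (n : K)] : ∃ ψ : AddChar (ZMod n) K, ψ.IsPrimitive := by
  obtain ⟨ζ, hζ⟩ := IsAlgClosed.exists_root (Polynomial.cyclotomic n K)
    (Polynomial.degree_cyclotomic_pos n K (NeZero.pos n)).ne'
  exact ⟨_, zmodChar_primitive_of_primitive_root n (Polynomial.isRoot_cyclotomic_iff.mp hζ)⟩

namespace MulChar

lemma orderOf_eq_orderOf_apply {M R : Type*} [CommMonoid M] [CommMonoidWithZero R] {g : Mˣ}
    (hg : ∀ x, x ∈ Subgroup.zpowers g) (χ : MulChar M R) : orderOf χ = orderOf (χ g) :=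
  (orderOf_injective (⟨⟨fun χ ↦ χ g, one_apply_coe g⟩, fun χ χ' ↦ mul_apply χ χ' g⟩ :
    MulChar M R →* R) (fun χ χ' h ↦ (eq_iff hg χ χ').mpr h) χ).symm

lemma exists_pow_orderOf_eq {F R : Type*} [Field F] [Fintype F] [CommMonoidWithZero R]
    [Nontrivial R] {χ : MulChar F R} {a : F} (h : χ a = 1) : ∃ x : F, x ^ orderOf χ = a := by
  obtain ⟨g, hg⟩ := IsCyclic.exists_generator (α := Fˣ)
  have ha : a ≠ 0 := by rintro rfl; exact zero_ne_one (χ.map_zero ▸ h)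
  lift a to Fˣ using ha.isUnit
  obtain ⟨m, rfl⟩ := mem_powers_iff_mem_zpowers.mpr (hg a)
  rw [Units.val_pow_eq_pow_val, map_pow, ← orderOf_dvd_iff_pow_eq_one,
    ← orderOf_eq_orderOf_apply hg] at h
  obtain ⟨t, rfl⟩ := h
  exact ⟨(g ^ t : Fˣ), by rw [← Units.val_pow_eq_pow_val, ← pow_mul, mul_comm]⟩

lemma orderOf_ringHomComp_eq_four {F R S : Type*} [Field F] [Fintype F] [CommRing R] [IsDomain R]
    [CommRing S] {χ : MulChar F R} (hχ : orderOf χ = 4) (f : R →+* S) (hS : (-1 : S) ≠ 1) :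
    orderOf (χ.ringHomComp f) = 4 := by
  obtain ⟨g, hg⟩ := IsCyclic.exists_generator (α := Fˣ)
  rw [orderOf_eq_orderOf_apply hg] at hχ ⊢
  have hsq : (χ g ^ 2) ^ 2 = 1 := by rw [← pow_mul, show 2 * 2 = orderOf (χ g) by rw [hχ],
    pow_orderOf_eq_one]
  have hsq' : χ g ^ 2 = -1 :=
    (sq_eq_one_iff.mp hsq).resolve_left (pow_ne_one_of_lt_orderOf two_ne_zero (by omega))
  exact orderOf_eq_four_of_sq_eq_neg_one (by rw [ringHomComp_apply, ← map_pow, hsq', map_neg,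
    map_one]) hS

end MulChar

section GaussSum

lemma gaussSum_pow_char {R K : Type*} [CommRing R] [Fintype R] [Field K] (q : ℕ) [Fact q.Prime]
    [CharP K q] (hq : IsUnit (q : R)) (χ : MulChar R K) (ψ : AddChar R K) :
    gaussSum χ ψ ^ q = (χ ^ q)⁻¹ q * gaussSum (χ ^ q) ψ := by
  rw [gaussSum_frob, AddChar.pow_mulShift, ← hq.unit_spec, gaussSum_mulShift_eq]

variable {F K : Type*} [Field F] [Fintype F] [Field K] {χ : MulChar F K} {ψ : AddChar F K}

lemma gaussSum_pow_four (hχ : orderOf χ = 4) (hψ : ψ.IsPrimitive) :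
    gaussSum χ ψ ^ 4 = jacobiSum χ χ ^ 2 * Fintype.card F := by
  have hχ2 : orderOf (χ ^ 2) = 2 := by rw [orderOf_pow' χ two_ne_zero, hχ]; rfl
  have hχ2_ne : χ ^ 2 ≠ 1 := pow_ne_one_of_lt_orderOf two_ne_zero (by omega)
  have hsq : gaussSum χ ψ ^ 2 = gaussSum (χ ^ 2) ψ * jacobiSum χ χ := by
    rw [sq, sq, jacobiSum_mul_nontrivial (sq χ ▸ hχ2_ne)]
  have hsq2 : gaussSum (χ ^ 2) ψ ^ 2 = Fintype.card F := by
    have := gaussSum_mul_gaussSum_pow_orderOf_sub_one hχ2_ne hψ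
    rwa [hχ2, pow_one, ← sq, MulChar.pow_apply' χ two_ne_zero, ← map_pow, neg_one_sq,
      χ.map_one, one_mul] at this
  calc gaussSum χ ψ ^ 4 = (gaussSum χ ψ ^ 2) ^ 2 := by ring
    _ = jacobiSum χ χ ^ 2 * Fintype.card F := by rw [hsq, mul_pow, hsq2, mul_comm]

end GaussSum

def qStar (q : ℕ) : ℤ := (-1) ^ ((q - 1) / 2) * q

lemma qStar_of_mod_four_eq_one {q : ℕ} (h : q % 4 = 1) : qStar q = q := by
  rw [qStar, Even.neg_one_pow ⟨q / 4, by omega⟩, one_mul]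

lemma qStar_of_mod_four_eq_three {q : ℕ} (h : q % 4 = 3) : qStar q = -q := by
  rw [qStar, Odd.neg_one_pow ⟨q / 4, by omega⟩, neg_one_mul]

theorem MulChar.apply_qStar_eq_one {p q : ℕ} [Fact p.Prime] [Fact q.Prime] (hpq : p ≠ q)
    (hq : Odd q) {K : Type*} [Field K] [CharP K q] {χ : MulChar (ZMod p) K} (hχ : orderOf χ = 4)
    {ψ : AddChar (ZMod p) K} (hψ : ψ.IsPrimitive) {a : ℤ} (hJ : jacobiSum χ χ = a)
    (hp : (p : K) = a ^ 2) : χ (qStar q) = 1 := by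
  have hpK : (p : K) ≠ 0 := by
    rw [Ne, CharP.cast_eq_zero_iff K q, Nat.prime_dvd_prime_iff_eq Fact.out Fact.out]
    exact hpq.symm
  have hqF : IsUnit (q : ZMod p) := by
    rw [isUnit_iff_ne_zero, Ne, ZMod.natCast_eq_zero_iff,
      Nat.prime_dvd_prime_iff_eq Fact.out Fact.out]
    exact hpq
  have hcard : (Fintype.card (ZMod p) : K) = a ^ 2 := by rw [ZMod.card, hp]
  have ha : (a : K) ≠ 0 := fun h ↦ hpK (by rw [hp, h, zero_pow two_ne_zero])
  have hχ1 : χ ≠ 1 := fun h ↦ by simp [h] at hχ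
  have hg : gaussSum χ ψ ≠ 0 := gaussSum_ne_zero_of_nontrivial (hcard ▸ pow_ne_zero 2 ha) hχ1 hψ
  have hg4 : gaussSum χ ψ ^ 4 = a ^ 4 := by rw [gaussSum_pow_four hχ hψ, hJ, hcard]; ring
  have hpow (x : K) : x ^ q = (x ^ 4) ^ (q / 4) * x ^ (q % 4) := by
    rw [← pow_mul, ← pow_add, Nat.div_add_mod]
  have haq : ((a : K) ^ 4) ^ (q / 4) * (a : K) ^ (q % 4) = a := by
    rw [← hpow, ← frobenius_def, map_intCast]
  have hfrob := gaussSum_pow_char q hqF χ ψ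
  rw [hpow, hg4, ← pow_mod_orderOf χ, hχ] at hfrob
  obtain h | h : q % 4 = 1 ∨ q % 4 = 3 := by obtain ⟨m, rfl⟩ := hq; omega
  · simp only [h, pow_one, MulChar.inv_apply_eq_inv'] at hfrob
    rw [h, pow_one] at haq
    rw [qStar_of_mod_four_eq_one h, Int.cast_natCast, ← inv_eq_one]
    refine mul_right_cancel₀ (mul_ne_zero ha hg) ?_
    linear_combination (-a) * hfrob + gaussSum χ ψ * haq
  · have hinv : (χ ^ 3)⁻¹ = χ := inv_eq_of_mul_eq_one_left
      (by rw [← pow_succ', show 3 + 1 = orderOf χ by rw [hχ], pow_orderOf_eq_one])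
    rw [h, hinv] at hfrob
    rw [h] at haq
    have hg3 := gaussSum_mul_gaussSum_pow_orderOf_sub_one hχ1 hψ
    rw [hχ, hcard] at hg3
    rw [qStar_of_mod_four_eq_three h, Int.cast_neg, Int.cast_natCast, neg_eq_neg_one_mul, map_mul]
    refine mul_right_cancel₀ (pow_ne_zero 2 ha) ?_
    linear_combination (-χ q) * hg3 - gaussSum χ ψ * hfrob + ((a : K) ^ 4) ^ (q / 4) * hg4 +
      a * haq

namespace GaussianInt

lemma sqrtd_sq : (Zsqrtd.sqrtd : GaussianInt) ^ 2 = -1 := by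
  rw [sq, Zsqrtd.dmuld]; rfl

lemma isPrimitiveRoot_sqrtd : IsPrimitiveRoot (Zsqrtd.sqrtd : GaussianInt) 4 :=
  orderOf_eq_four_of_sq_eq_neg_one sqrtd_sq (by decide) ▸ IsPrimitiveRoot.orderOf _

variable {F : Type*} [Field F] [Fintype F]

lemma re_sq_add_im_sq_jacobiSum {χ φ : MulChar F GaussianInt} (hχ : χ ≠ 1) (hφ : φ ≠ 1)
    (hχφ : χ * φ ≠ 1) :
    (jacobiSum χ φ).re ^ 2 + (jacobiSum χ φ).im ^ 2 = Fintype.card F := by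
  set χc := χ.ringHomComp toComplex
  set φc := φ.ringHomComp toComplex
  have hchar : ringChar ℂ ≠ ringChar F := by
    rw [ringChar.eq_zero]; exact (CharP.ringChar_ne_zero_of_finite F).symm
  have h := jacobiSum_mul_jacobiSum_inv hchar
    ((MulChar.ringHomComp_ne_one_iff toComplex_injective).mpr hχ)
    ((MulChar.ringHomComp_ne_one_iff toComplex_injective).mpr hφ)
    (by rwa [← MulChar.ringHomComp_mul, MulChar.ringHomComp_ne_one_iff toComplex_injective])
  have hstar : jacobiSum χc⁻¹ φc⁻¹ = star (jacobiSum χc φc) := by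
    simp only [jacobiSum, star_sum, star_mul', MulChar.star_apply']
  rw [hstar, jacobiSum_ringHomComp, RCLike.star_def, Complex.mul_conj, ← intCast_complex_norm] at h
  have hnorm : (jacobiSum χ φ).norm = Fintype.card F := by exact_mod_cast h
  rw [Zsqrtd.norm_def] at hnorm
  linear_combination hnorm

variable {χ : MulChar F GaussianInt}

lemma re_sq_add_im_sq_jacobiSum_self (hχ : orderOf χ = 4) :
    (jacobiSum χ χ).re ^ 2 + (jacobiSum χ χ).im ^ 2 = Fintype.card F :=
  re_sq_add_im_sq_jacobiSum (fun h ↦ by simp [h] at hχ) (fun h ↦ by simp [h] at hχ)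
    (by rw [← sq]; exact pow_ne_one_of_lt_orderOf two_ne_zero (by omega))

lemma odd_re_jacobiSum (hχ : orderOf χ = 4) : Odd (jacobiSum χ χ).re := by
  have hχ4 : χ ^ 4 = 1 := hχ ▸ pow_orderOf_eq_one χ
  obtain ⟨z, -, hz⟩ := exists_jacobiSum_eq_neg_one_add (by norm_num) hχ4 hχ4
    (hχ ▸ MulChar.orderOf_dvd_card_sub_one F χ) isPrimitiveRoot_sqrtd
  have hsq : ((Zsqrtd.sqrtd : GaussianInt) - 1) ^ 2 = ⟨0, -2⟩ := by
    rw [Zsqrtd.decompose]; linear_combination sqrtd_sq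
  refine ⟨z.im - 1, ?_⟩
  rw [hz, hsq, Zsqrtd.re_add, Zsqrtd.re_mul, Zsqrtd.re_neg, Zsqrtd.re_one]
  ring

lemma sq_im_jacobiSum {p : ℕ} [Fact p.Prime] {χ : MulChar (ZMod p) GaussianInt}
    (hχ : orderOf χ = 4) {L M : ℤ} (hLM : (p : ℤ) = L ^ 2 + 4 * M ^ 2) :
    (jacobiSum χ χ).im ^ 2 = (2 * M) ^ 2 := by
  have hnorm := re_sq_add_im_sq_jacobiSum_self hχ
  rw [ZMod.card] at hnorm
  refine (Int.sq_eq_sq_of_sq_add_sq_eq (Nat.prime_iff_prime_int.mp Fact.out) hnorm (c := L)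
    (by rw [hLM]; ring)).resolve_left fun h ↦ ?_
  have hodd := (odd_re_jacobiSum hχ).pow (n := 2)
  rw [h, ← Int.not_even_iff_odd] at hodd
  exact hodd ((even_two_mul M).pow_of_ne_zero two_ne_zero)

end GaussianInt

theorem exists_pow_four_eq_qStar {p q : ℕ} [Fact p.Prime] [Fact q.Prime] (hpq : p ≠ q)
    (hq : Odd q) {χ : MulChar (ZMod p) GaussianInt} (hχ : orderOf χ = 4)
    (hqJ : (q : ℤ) ∣ (jacobiSum χ χ).im) : ∃ x : ZMod p, x ^ 4 = qStar q := by
  have hnorm := GaussianInt.re_sq_add_im_sq_jacobiSum_self hχ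
  set J := jacobiSum χ χ
  let K := AlgebraicClosure (ZMod q)
  have : NeZero (p : K) := ⟨by
    rw [Ne, CharP.cast_eq_zero_iff K q, Nat.prime_dvd_prime_iff_eq Fact.out Fact.out]
    exact hpq.symm⟩
  obtain ⟨ψ, hψ⟩ := AddChar.exists_isPrimitive_zmod p K
  obtain ⟨i, hi⟩ := IsAlgClosed.exists_pow_nat_eq (-1 : K) two_pos
  let φ : GaussianInt →+* K := Zsqrtd.lift ⟨i, by rw [← sq, hi]; norm_num⟩
  have hχK : orderOf (χ.ringHomComp φ) = 4 := by
    refine MulChar.orderOf_ringHomComp_eq_four hχ φ (Ring.neg_one_ne_one_of_char_ne_two ?_)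
    rw [ringChar.eq K q]; rintro rfl; exact (by decide : ¬Odd 2) hq
  have him : (J.im : K) = 0 := (CharP.intCast_eq_zero_iff K q _).mpr hqJ
  have hJK : jacobiSum (χ.ringHomComp φ) (χ.ringHomComp φ) = J.re := by
    rw [jacobiSum_ringHomComp, Zsqrtd.lift_apply_apply, him, zero_mul, add_zero]
  have hpK : (p : K) = J.re ^ 2 := by
    have := congrArg (Int.cast : ℤ → K) hnorm
    push_cast [ZMod.card, him] at this
    linear_combination -this
  exact hχK ▸ MulChar.exists_pow_orderOf_eq (MulChar.apply_qStar_eq_one hpq hq hχK hψ hJK hpK)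

/-- If p ≡ 1 (mod 4) is prime, p = L² + 4M², and q is an odd prime, q ≠ p, dividing M,
then q* = (-1)^((q-1)/2)·q is a biquadratic residue modulo p. -/
theorem biquadratic_residue_of_dvd_M (p : ℕ) (hp : p.Prime) (hp4 : p % 4 = 1)
    (L M : ℤ) (hLM : (p : ℤ) = L ^ 2 + 4 * M ^ 2)
    (q : ℕ) (hq : q.Prime) (hq2 : Odd q) (hqp : q ≠ p) (hdvd : (q : ℤ) ∣ M) :
    ∃ x : ℤ, x ^ 4 ≡ (-1) ^ ((q - 1) / 2) * (q : ℤ) [ZMOD (p : ℤ)] := by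
  have := Fact.mk hp
  have := Fact.mk hq
  obtain ⟨χ, hχ⟩ := MulChar.exists_mulChar_orderOf (ZMod p)
    (by rw [ZMod.card]; omega) GaussianInt.isPrimitiveRoot_sqrtd
  have hqJ : (q : ℤ) ∣ (jacobiSum χ χ).im := (Nat.prime_iff_prime_int.mp hq).dvd_of_dvd_pow
    (GaussianInt.sq_im_jacobiSum hχ hLM ▸ dvd_pow (hdvd.mul_left 2) two_ne_zero)
  obtain ⟨x, hx⟩ := exists_pow_four_eq_qStar hqp.symm hq2 hχ hqJ
  refine ⟨x.cast, ?_⟩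
  rw [← ZMod.intCast_eq_intCast_iff, Int.cast_pow, ZMod.intCast_zmod_cast, hx, qStar]
end

section
/- There is an absolute constant C > 0 with the following property: for every prime p with p ≡ 3 (mod 4), letting S denote the (finite, nonempty) set of integer triples (a, b, c) with a ≥ 1, |b| ≤ a ≤ c and b² − 4ac = −p, and letting h = |S|, there exists a triple (a, b, c) ∈ S with a ≥ C·h/log(2h). -/
/-!
Let `A` be the largest leading coefficient of a reduced form of discriminant `-p`. For each
`a ≤ A`, the middle coefficients `b ∈ [-a, a]` are square roots of `-p` modulo `4a`. Fixing one
root `b₀`, two roots `x, y` with `gcd (4a) (x - b₀) = gcd (4a) (y - b₀)` satisfy `2a ∣ x - y`, so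
each value of this gcd accounts for at most two `b`, and there are at most `2 d(4a) ≤ 6 d(a)`
forms with leading coefficient `a`. Summing, `h ≤ 6 ∑_{a ≤ A} d(a) ≤ 6 A (1 + log A)`, which
inverts to `A ≥ h / (18 log (2h))`.
-/

/-- The set of reduced positive definite forms (a, b, c) of discriminant -p. -/
def reducedForms (p : ℕ) : Set (ℤ × ℤ × ℤ) :=
  {t | 1 ≤ t.1 ∧ |t.2.1| ≤ t.1 ∧ t.1 ≤ t.2.2 ∧ t.2.1 ^ 2 - 4 * t.1 * t.2.2 = -(p : ℤ)}

open Finset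

theorem Int.dvd_two_mul_sub_of_gcd_eq {n b₀ x y : ℤ} (hb₀ : IsCoprime n b₀)
    (hx : n ∣ (x - b₀) * (x + b₀)) (hy : n ∣ (y - b₀) * (y + b₀))
    (hxy : gcd n (x - b₀) = gcd n (y - b₀)) : n ∣ 2 * (x - y) := by
  have hgx : (gcd n (x - b₀) : ℤ) ∣ x - b₀ := gcd_dvd_right _ _
  have hgy : (gcd n (x - b₀) : ℤ) ∣ y - b₀ := hxy ▸ gcd_dvd_right _ _
  have hnx : n ∣ gcd n (x - b₀) * (x + b₀) := by
    rw [Int.coe_gcd]; exact dvd_gcd_mul_of_dvd_mul hx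
  have hny : n ∣ gcd n (x - b₀) * (y + b₀) := by
    rw [hxy, Int.coe_gcd]; exact dvd_gcd_mul_of_dvd_mul hy
  generalize (gcd n (x - b₀) : ℤ) = g at hgx hgy hnx hny
  obtain ⟨w, hw⟩ : g ∣ x - y := by simpa using dvd_sub hgx hgy
  obtain ⟨w', hw'⟩ := hgx
  have h₁ : n ∣ (x - y) * (x + b₀) := by
    rw [hw, mul_comm g, mul_assoc]; exact hnx.mul_left w
  have h₂ : n ∣ (x - y) * (x - b₀) := by
    have : n ∣ g * (x - y) := by simpa [← mul_sub] using dvd_sub hnx hny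
    rw [hw', mul_left_comm, ← mul_assoc]; exact this.mul_right w'
  have : n ∣ b₀ * (2 * (x - y)) := by
    -- `2 b₀ (x - y) = (x - y) (x + b₀) - (x - y) (x - b₀)`
    have := dvd_sub h₁ h₂
    ring_nf at this ⊢
    exact this
  exact hb₀.dvd_of_dvd_mul_left this

theorem Int.card_le_two_of_forall_dvd_sub {a : ℤ} {s : Finset ℤ} (hs : ∀ x ∈ s, |x| ≤ a)
    (hdvd : ∀ x ∈ s, ∀ y ∈ s, 2 * a ∣ x - y) : #s ≤ 2 := by
  -- off `a`, the elements lie in `[-a, a)`, which meets each class mod `2a` once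
  have : #(s.erase a) ≤ 1 := by
    refine card_le_one.2 fun x hx y hy => ?_
    have hxa := abs_le.1 (hs x (mem_of_mem_erase hx))
    have hya := abs_le.1 (hs y (mem_of_mem_erase hy))
    have hlt : |x - y| < 2 * a := by
      have := ne_of_mem_erase hx; have := ne_of_mem_erase hy
      rw [abs_lt]; constructor <;> omega
    linarith [Int.eq_zero_of_abs_lt_dvd (hdvd x (mem_of_mem_erase hx) y (mem_of_mem_erase hy)) hlt]
  have := pred_card_le_card_erase (s := s) (a := a)
  omega

theorem Nat.card_divisors_mul_le (m n : ℕ) : #(m * n).divisors ≤ #m.divisors * #n.divisors := by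
  rw [Nat.divisors_mul]; exact card_mul_le

/-- The `b` with `|b| ≤ a` for which some integer `c` gives `b ^ 2 - 4 * a * c = -D`. -/
noncomputable def middleCoeffs (D : ℤ) (a : ℕ) : Finset ℤ :=
  {b ∈ Icc (-(a : ℤ)) a | 4 * (a : ℤ) ∣ b ^ 2 + D}

theorem isCoprime_of_mem_middleCoeffs {D : ℤ} {a : ℕ} (hD : IsCoprime D (4 * a)) {b : ℤ}
    (hb : b ∈ middleCoeffs D a) : IsCoprime (4 * a : ℤ) b := by
  obtain ⟨k, hk⟩ := (mem_filter.1 hb).2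
  have hsq : b ^ 2 = -D + k * (4 * a) := by linarith
  have : IsCoprime (b ^ 2) (4 * a : ℤ) := by
    rw [hsq, IsCoprime.add_mul_right_left_iff]; exact hD.neg_left
  exact ((IsCoprime.pow_left_iff two_pos).1 this).symm

theorem card_middleCoeffs_le {D : ℤ} {a : ℕ} (ha : a ≠ 0) (hD : IsCoprime D (4 * a)) :
    #(middleCoeffs D a) ≤ 6 * #a.divisors := by
  rcases (middleCoeffs D a).eq_empty_or_nonempty with h | ⟨b₀, hb₀⟩
  · simp [h]
  set f : ℤ → ℕ := fun b => Int.gcd (4 * a) (b - b₀)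
  have hsq : ∀ b ∈ middleCoeffs D a, (4 * a : ℤ) ∣ (b - b₀) * (b + b₀) := fun b hb => by
    have := dvd_sub (mem_filter.1 hb).2 (mem_filter.1 hb₀).2
    ring_nf at this ⊢; exact this
  have hfiber : ∀ n ∈ (middleCoeffs D a).image f, #{b ∈ middleCoeffs D a | f b = n} ≤ 2 := by
    intro n _
    apply Int.card_le_two_of_forall_dvd_sub (a := a)
    · intro x hx
      exact abs_le.2 (mem_Icc.1 (mem_filter.1 (mem_filter.1 hx).1).1)
    · intro x hx y hy
      have := Int.dvd_two_mul_sub_of_gcd_eq (isCoprime_of_mem_middleCoeffs hD hb₀)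
        (hsq x (mem_filter.1 hx).1) (hsq y (mem_filter.1 hy).1)
        ((mem_filter.1 hx).2.trans (mem_filter.1 hy).2.symm)
      rw [show (4 * a : ℤ) = 2 * (2 * a) by ring] at this
      exact (mul_dvd_mul_iff_left two_ne_zero).1 this
  have himage : (middleCoeffs D a).image f ⊆ (4 * a).divisors := by
    intro n hn
    obtain ⟨b, -, rfl⟩ := mem_image.1 hn
    refine Nat.mem_divisors.2 ⟨?_, by omega⟩
    simpa [f, Int.natAbs_mul] using Int.gcd_dvd_natAbs_left (4 * a) (b - b₀)
  calc #(middleCoeffs D a) ≤ 2 * #((middleCoeffs D a).image f) :=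
        card_le_mul_card_image _ 2 hfiber
    _ ≤ 2 * (3 * #a.divisors) := by
      gcongr
      calc #((middleCoeffs D a).image f) ≤ #(4 * a).divisors := card_le_card himage
        _ ≤ #(Nat.divisors 4) * #a.divisors := Nat.card_divisors_mul_le 4 a
        _ = 3 * #a.divisors := by rw [show #(Nat.divisors 4) = 3 by decide]
    _ = 6 * #a.divisors := by ring

theorem Nat.sum_card_divisors_eq_sum_div (N : ℕ) :
    ∑ a ∈ Ioc 0 N, #a.divisors = ∑ e ∈ Ioc 0 N, N / e := by
  have hdiv : ∀ a ∈ Ioc 0 N, a.divisors = (Ioc 0 N).bipartiteAbove (fun a e => e ∣ a) a := by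
    intro a ha
    obtain ⟨ha0, haN⟩ := mem_Ioc.1 ha
    ext e
    simp only [bipartiteAbove, Nat.mem_divisors, mem_filter, mem_Ioc]
    exact ⟨fun ⟨he, _⟩ => ⟨⟨Nat.pos_of_dvd_of_pos he ha0, (Nat.le_of_dvd ha0 he).trans haN⟩, he⟩,
      fun ⟨_, he⟩ => ⟨he, ha0.ne'⟩⟩
  rw [sum_congr rfl fun a ha => congrArg card (hdiv a ha),
    sum_card_bipartiteAbove_eq_sum_card_bipartiteBelow]
  exact sum_congr rfl fun e _ => Nat.Ioc_filter_dvd_card_eq_div N e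

theorem Nat.sum_card_divisors_le (N : ℕ) :
    (∑ a ∈ Ioc 0 N, #a.divisors : ℝ) ≤ N * (1 + Real.log N) := by
  calc (∑ a ∈ Ioc 0 N, #a.divisors : ℝ) = ∑ e ∈ Ioc 0 N, ((N / e : ℕ) : ℝ) := by
        exact_mod_cast Nat.sum_card_divisors_eq_sum_div N
    _ ≤ ∑ e ∈ Ioc 0 N, (N / e : ℝ) := sum_le_sum fun e _ => Nat.cast_div_le
    _ = N * harmonic N := by
      rw [harmonic_eq_sum_Icc, ← Icc_add_one_left_eq_Ioc, zero_add]
      push_cast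
      rw [mul_sum]
      exact sum_congr rfl fun e _ => div_eq_mul_inv _ _
    _ ≤ N * (1 + Real.log N) := by gcongr; exact harmonic_le_one_add_log N

theorem div_log_two_mul_le_of_le_mul_one_add_log {h A : ℝ} (hA : 1 ≤ A) (hh : 1 ≤ h)
    (hhA : h ≤ 6 * A * (1 + Real.log A)) : h / Real.log (2 * h) ≤ 18 * A := by
  have hlog2 : 1 / 2 < Real.log 2 := by linarith [Real.log_two_gt_d9]
  have hlog2h : Real.log 2 ≤ Real.log (2 * h) := Real.log_le_log two_pos (by linarith)
  rw [div_le_iff₀ (by linarith)]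
  rcases le_total A h with hAh | hhA'
  · have : Real.log A ≤ Real.log (2 * h) := Real.log_le_log (by linarith) (by linarith)
    nlinarith
  · nlinarith

theorem Nat.isCoprime_four_mul_of_lt_prime {p a : ℕ} (hp : p.Prime) (hp2 : p ≠ 2) (ha : a ≠ 0)
    (hap : a < p) : IsCoprime (p : ℤ) (4 * a) := by
  have h4 : Nat.Coprime p 4 := ((Nat.coprime_primes hp Nat.prime_two).2 hp2).pow_right 2
  exact_mod_cast Nat.isCoprime_iff_coprime.2
    (Nat.Coprime.mul_right h4 (Nat.coprime_of_lt_prime ha hap hp))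

section ReducedForms

variable {p : ℕ}

theorem fst_lt_of_mem_reducedForms {t : ℤ × ℤ × ℤ} (ht : t ∈ reducedForms p) : t.1 < p := by
  obtain ⟨h1, hb, hac, hdisc⟩ := ht
  obtain ⟨hb₁, hb₂⟩ := abs_le.1 hb
  nlinarith

theorem reducedForms_nonempty (hp4 : p % 4 = 3) : (reducedForms p).Nonempty := by
  obtain ⟨k, rfl⟩ : ∃ k, p = 4 * k + 3 := ⟨p / 4, by omega⟩
  exact ⟨(1, 1, k + 1), by norm_num [reducedForms]; ring⟩

theorem mapsTo_reducedForms_sigma_middleCoeffs {A : ℕ} (hA : ∀ t ∈ reducedForms p, t.1 ≤ A) :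
    Set.MapsTo (fun t => (⟨t.1.toNat, t.2.1⟩ : Σ _ : ℕ, ℤ)) (reducedForms p)
      ((Ioc 0 A).sigma (middleCoeffs p)) := by
  rintro ⟨a, b, c⟩ ht
  have hA := hA _ ht
  obtain ⟨h1, hb, -, hdisc⟩ := ht
  lift a to ℕ using (by omega)
  simp only [coe_sigma, Set.mem_sigma_iff, Int.toNat_natCast, coe_Ioc, Set.mem_Ioc,
    mem_coe, middleCoeffs, mem_filter, mem_Icc]
  exact ⟨by omega, abs_le.1 hb, ⟨c, by linarith⟩⟩

theorem injOn_reducedForms_sigma :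
    Set.InjOn (fun t => (⟨t.1.toNat, t.2.1⟩ : Σ _ : ℕ, ℤ)) (reducedForms p) := by
  rintro ⟨a, b, c⟩ ⟨h1, -, -, hdisc⟩ ⟨a', b', c'⟩ ⟨h1', -, -, hdisc'⟩ h
  simp only [Sigma.mk.injEq, heq_eq_eq] at h
  obtain ⟨ha, rfl⟩ := h
  obtain rfl : a = a' := by omega
  obtain rfl : c = c' := by
    refine mul_left_cancel₀ (show 4 * a ≠ 0 by omega) ?_
    linarith
  rfl

theorem reducedForms_finite (p : ℕ) : (reducedForms p).Finite :=
  Set.Finite.of_injOn (mapsTo_reducedForms_sigma_middleCoeffs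
    fun _ ht => (fst_lt_of_mem_reducedForms ht).le) injOn_reducedForms_sigma (finite_toSet _)

theorem ncard_reducedForms_le (hp : p.Prime) (hp2 : p ≠ 2) {A : ℕ}
    (hA : ∀ t ∈ reducedForms p, t.1 ≤ A) (hAp : A < p) :
    (reducedForms p).ncard ≤ 6 * ∑ a ∈ Ioc 0 A, #a.divisors := by
  calc (reducedForms p).ncard ≤ #((Ioc 0 A).sigma (middleCoeffs p)) := by
        refine (Set.ncard_le_ncard_of_injOn _ (mapsTo_reducedForms_sigma_middleCoeffs hA)
          injOn_reducedForms_sigma (finite_toSet _)).trans_eq (Set.ncard_coe_finset _)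
    _ = ∑ a ∈ Ioc 0 A, #(middleCoeffs p a) := card_sigma _ _
    _ ≤ ∑ a ∈ Ioc 0 A, 6 * #a.divisors := sum_le_sum fun a ha => by
        obtain ⟨ha0, haA⟩ := mem_Ioc.1 ha
        exact card_middleCoeffs_le ha0.ne'
          (Nat.isCoprime_four_mul_of_lt_prime hp hp2 ha0.ne' (haA.trans_lt hAp))
    _ = 6 * ∑ a ∈ Ioc 0 A, #a.divisors := (mul_sum _ _ _).symm

theorem ncard_reducedForms_le_mul_one_add_log (hp : p.Prime) (hp2 : p ≠ 2) {A : ℕ}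
    (hA : ∀ t ∈ reducedForms p, t.1 ≤ A) (hAp : A < p) :
    ((reducedForms p).ncard : ℝ) ≤ 6 * A * (1 + Real.log A) :=
  calc _ ≤ 6 * (∑ a ∈ Ioc 0 A, #a.divisors : ℝ) := by
        exact_mod_cast ncard_reducedForms_le hp hp2 hA hAp
    _ ≤ 6 * A * (1 + Real.log A) := by
        rw [mul_assoc]; gcongr; exact Nat.sum_card_divisors_le A

end ReducedForms

/-- There is an absolute constant C > 0 such that for every prime p ≡ 3 (mod 4),
the set S of reduced forms of discriminant -p is finite and nonempty, and, with
h = |S|, some (a, b, c) ∈ S has a ≥ C·h/log(2h). -/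
theorem exists_form_with_large_a :
    ∃ C : ℝ, 0 < C ∧ ∀ p : ℕ, p.Prime → p % 4 = 3 →
      (reducedForms p).Finite ∧ (reducedForms p).Nonempty ∧
        ∃ t ∈ reducedForms p,
          C * (Nat.card (reducedForms p) : ℝ) /
              Real.log (2 * (Nat.card (reducedForms p) : ℝ)) ≤ (t.1 : ℝ) := by
  refine ⟨1 / 18, by norm_num, fun p hp hp4 => ?_⟩
  have hfin := reducedForms_finite p
  have hne := reducedForms_nonempty hp4
  obtain ⟨t, ht, hmax⟩ := Set.exists_max_image _ (fun t => t.1) hfin hne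
  refine ⟨hfin, hne, t, ht, ?_⟩
  obtain ⟨A, hA⟩ : ∃ A : ℕ, t.1 = A := ⟨t.1.toNat, by have := ht.1; omega⟩
  have hA1 : (1 : ℝ) ≤ A := by exact_mod_cast (show (1 : ℤ) ≤ A from hA ▸ ht.1)
  have hh : (1 : ℝ) ≤ (reducedForms p).ncard := by exact_mod_cast (Set.ncard_pos hfin).2 hne
  have hbound := ncard_reducedForms_le_mul_one_add_log hp (by omega) (hA ▸ hmax)
    (by exact_mod_cast hA ▸ fst_lt_of_mem_reducedForms ht)
  have := div_log_two_mul_le_of_le_mul_one_add_log hA1 hh hbound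
  rw [Nat.card_coe_set_eq, hA, Int.cast_natCast, mul_div_assoc]
  linarith
end

section
/- Let p be a prime with p ≡ 3 (mod 4), let a, b, c be integers with b² − 4ac = −p, and let q be an odd prime with q ≠ p. If q divides a·m² + b·m + c for some integer m, then q is a quadratic residue modulo p. -/
/-- If p ≡ 3 (mod 4) is prime, b² - 4ac = -p, and q ≠ p is an odd prime dividing
am² + bm + c for some integer m, then q is a quadratic residue modulo p. -/
theorem quadratic_residue_of_dvd_form_value (p : ℕ) (hp : p.Prime) (hp4 : p % 4 = 3)
    (a b c : ℤ) (hdisc : b ^ 2 - 4 * a * c = -(p : ℤ))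
    (q : ℕ) (hq : q.Prime) (hq2 : Odd q) (hqp : q ≠ p)
    (hm : ∃ m : ℤ, (q : ℤ) ∣ a * m ^ 2 + b * m + c) :
    ∃ x : ℤ, x ^ 2 ≡ (q : ℤ) [ZMOD (p : ℤ)] := by
  haveI : Fact p.Prime := ⟨hp⟩
  haveI : Fact q.Prime := ⟨hq⟩
  obtain ⟨m, hqdvd⟩ := hm
  -- q divides (2am+b)² + p
  have key : (q : ℤ) ∣ (2*a*m + b)^2 + (p : ℤ) := by
    have h : (2*a*m + b)^2 + (p : ℤ) = 4*a*(a*m^2 + b*m + c) := by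
      linear_combination hdisc
    rw [h]
    exact hqdvd.mul_left _
  -- hence -p is a square in ZMod q
  have hsqneg : IsSquare (-(p : ZMod q)) := by
    refine ⟨((2*a*m + b : ℤ) : ZMod q), ?_⟩
    have h0 : (((2*a*m + b)^2 + (p : ℤ) : ℤ) : ZMod q) = 0 := by
      exact_mod_cast (ZMod.intCast_zmod_eq_zero_iff_dvd _ q).mpr key
    push_cast at h0 ⊢
    linear_combination -h0
  have hp0 : (p : ZMod q) ≠ 0 := by
    rw [Ne, ZMod.natCast_eq_zero_iff]
    intro hdvd
    exact hqp ((Nat.prime_dvd_prime_iff_eq hq hp).mp hdvd)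
  have hq4 : q % 4 = 1 ∨ q % 4 = 3 := by
    rcases Nat.odd_iff.mp hq2 with h
    omega
  have hp2 : p ≠ 2 := by omega
  -- q is a square in ZMod p
  have main : IsSquare ((q : ZMod p)) := by
    rcases hq4 with h1 | h3
    · -- q ≡ 1 mod 4 : -1 is a square mod q, hence p is a square mod q
      have hneg1 : IsSquare (-1 : ZMod q) := by
        rw [ZMod.exists_sq_eq_neg_one_iff]
        omega
      have hsq : IsSquare ((p : ZMod q)) := by
        have := hneg1.mul hsqneg
        simpa using this
      exact (ZMod.exists_sq_eq_prime_iff_of_mod_four_eq_one h1 hp2).mp hsq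
    · -- q ≡ 3 mod 4 : p is NOT a square mod q
      have hnsq : ¬ IsSquare ((p : ZMod q)) := by
        intro hsq
        have hneg1 : IsSquare (-1 : ZMod q) := by
          obtain ⟨x, hx⟩ := hsq
          obtain ⟨y, hy⟩ := hsqneg
          have hx0 : x ≠ 0 := by
            intro h; rw [h, mul_zero] at hx; exact hp0 hx
          refine ⟨y * x⁻¹, ?_⟩
          field_simp
          linear_combination hx + hy
        rw [ZMod.exists_sq_eq_neg_one_iff] at hneg1
        omega
      by_contra hB
      exact hnsq ((ZMod.exists_sq_eq_prime_iff_of_mod_four_eq_three h3 hp4 hqp).mpr hB)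
  obtain ⟨y, hy⟩ := main
  refine ⟨(y.val : ℤ), ?_⟩
  rw [← ZMod.intCast_eq_intCast_iff]
  push_cast
  rw [ZMod.natCast_val, ZMod.cast_id]
  rw [hy]; ring
end

section
/- For every prime p with p ≡ 1 (mod 3), there exist integers L and M with 4p = L² + 27M², and these integers are unique up to sign: if 4p = L₁² + 27M₁² = L₂² + 27M₂² with all L_i, M_i integers, then L₁ = ±L₂ and M₁ = ±M₂. -/
lemma exists_sqrt_neg_three (p : ℕ) (hp : p.Prime) (hp3 : p % 3 = 1) :
    ∃ t : ZMod p, t ^ 2 = -3 := by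
  haveI : Fact p.Prime := ⟨hp⟩
  have hcard : Fintype.card (ZMod p)ˣ = p - 1 := by
    rw [ZMod.card_units_eq_totient, Nat.totient_prime hp]
  have h2 : 2 ≤ p := hp.two_le
  have hdvd : 3 ∣ Fintype.card (ZMod p)ˣ := by rw [hcard]; omega
  obtain ⟨u, hu⟩ := exists_prime_orderOf_dvd_card 3 hdvd
  set ω : ZMod p := (u : ZMod p) with hω
  have hu3 : u ^ 3 = 1 := by rw [← hu]; exact pow_orderOf_eq_one u
  have hω3 : ω ^ 3 = 1 := by
    rw [hω, ← Units.val_pow_eq_pow_val, hu3, Units.val_one]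
  have hωne : ω ≠ 1 := by
    intro h
    have : u = 1 := Units.ext h
    rw [this, orderOf_one] at hu; omega
  have hsum : ω ^ 2 + ω + 1 = 0 := by
    have hfac : (ω - 1) * (ω ^ 2 + ω + 1) = 0 := by linear_combination hω3
    rcases mul_eq_zero.mp hfac with h | h
    · exact absurd (sub_eq_zero.mp h) hωne
    · exact h
  exact ⟨2 * ω + 1, by linear_combination 4 * hsum⟩

-- Thue: small solution of X^2+3Y^2 ≡ 0 mod p
lemma thue (p : ℕ) (hp : p.Prime) (hp3 : p % 3 = 1) :
    ∃ X Y : ℤ, (p : ℤ) ∣ X ^ 2 + 3 * Y ^ 2 ∧ 0 < X ^ 2 + 3 * Y ^ 2 ∧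
      X ^ 2 + 3 * Y ^ 2 < 4 * p := by
  haveI : Fact p.Prime := ⟨hp⟩
  obtain ⟨t, ht⟩ := exists_sqrt_neg_three p hp hp3
  set n := Nat.sqrt p with hn
  have hnp : n * n < p := by
    rcases lt_or_eq_of_le (Nat.sqrt_le p) with h | h
    · exact h
    · exfalso
      have hd : p.sqrt ∣ p := ⟨p.sqrt, h.symm⟩
      rcases (Nat.Prime.eq_one_or_self_of_dvd hp _ hd) with h1 | h1
      · rw [h1] at h; have := hp.two_le; omega
      · rw [h1] at h; nlinarith [hp.two_le]
  have hcardlt : (Finset.univ : Finset (ZMod p)).card <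
      ((Finset.range (n+1)) ×ˢ (Finset.range (n+1))).card := by
    rw [Finset.card_product, Finset.card_range, Finset.card_univ, ZMod.card]
    have := Nat.lt_succ_sqrt p
    simpa [Nat.succ_eq_add_one, hn] using this
  obtain ⟨⟨a₁, b₁⟩, hab₁, ⟨a₂, b₂⟩, hab₂, hne, heq⟩ :=
    Finset.exists_ne_map_eq_of_card_lt_of_maps_to hcardlt
      (f := fun ab : ℕ × ℕ => (ab.1 : ZMod p) * t - (ab.2 : ZMod p))
      (fun a _ => Finset.mem_univ _)
  simp only [Finset.mem_product, Finset.mem_range] at hab₁ hab₂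
  refine ⟨(b₁ : ℤ) - b₂, (a₁ : ℤ) - a₂, ?_, ?_, ?_⟩
  · rw [← ZMod.intCast_zmod_eq_zero_iff_dvd]
    push_cast
    have hXY : ((b₁ : ZMod p) - b₂) = ((a₁ : ZMod p) - a₂) * t := by
      have := heq
      simp only at this
      linear_combination -this
    rw [hXY]
    linear_combination ((a₁ : ZMod p) - a₂)^2 * ht
  · have hne' : ((b₁:ℤ) - b₂) ≠ 0 ∨ ((a₁:ℤ) - a₂) ≠ 0 := by
      by_contra h
      push_neg at h
      apply hne
      have : a₁ = a₂ ∧ b₁ = b₂ := by omega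
      simp [this.1, this.2]
    rcases hne' with h | h
    · nlinarith [sq_nonneg ((a₁:ℤ) - a₂), sq_pos_of_ne_zero h]
    · nlinarith [sq_nonneg ((b₁:ℤ) - b₂), sq_pos_of_ne_zero h]
  · have h1 : ((b₁:ℤ) - b₂)^2 ≤ (n:ℤ) * n := by
      have : -(n:ℤ) ≤ (b₁:ℤ) - b₂ ∧ (b₁:ℤ) - b₂ ≤ n := by
        constructor <;> [omega; omega]
      nlinarith [this.1, this.2]
    have h2 : ((a₁:ℤ) - a₂)^2 ≤ (n:ℤ) * n := by
      have : -(n:ℤ) ≤ (a₁:ℤ) - a₂ ∧ (a₁:ℤ) - a₂ ≤ n := by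
        constructor <;> [omega; omega]
      nlinarith [this.1, this.2]
    have : (n:ℤ) * n < p := by exact_mod_cast hnp
    nlinarith


lemma rep_p (p : ℕ) (hp : p.Prime) (hp3 : p % 3 = 1)
    (X Y : ℤ) (hdvd : (p : ℤ) ∣ X ^ 2 + 3 * Y ^ 2) (hpos : 0 < X ^ 2 + 3 * Y ^ 2)
    (hlt : X ^ 2 + 3 * Y ^ 2 < 4 * p) :
    ∃ a b : ℤ, (p : ℤ) = a ^ 2 + 3 * b ^ 2 := by
  obtain ⟨k, hk⟩ := hdvd
  have hppos : (0:ℤ) < p := by exact_mod_cast hp.pos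
  have hkpos : 0 < k := by nlinarith
  have hklt : k < 4 := by nlinarith
  have hpodd : p % 2 = 1 := Nat.odd_iff.mp (hp.odd_of_ne_two (by omega))
  interval_cases k
  · exact ⟨X, Y, by linarith⟩
  · -- k = 2 : impossible
    exfalso
    rcases Int.even_or_odd X with ⟨u, hu⟩ | ⟨u, hu⟩ <;>
      rcases Int.even_or_odd Y with ⟨v, hv⟩ | ⟨v, hv⟩ <;> subst hu hv
    · have h' : 2*(p:ℤ) = 4*u^2 + 12*v^2 := by linear_combination -hk
      have hs := sq_nonneg u; have ht := sq_nonneg v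
      generalize u^2 = s at h' hs
      generalize v^2 = t at h' ht
      omega
    · have h' : 2*(p:ℤ) = 4*u^2 + 12*v^2 + 12*v + 3 := by linear_combination -hk
      have hs := sq_nonneg u; have ht := sq_nonneg v
      generalize u^2 = s at h' hs
      generalize v^2 = t at h' ht
      omega
    · have h' : 2*(p:ℤ) = 4*u^2 + 4*u + 12*v^2 + 1 := by linear_combination -hk
      have hs := sq_nonneg u; have ht := sq_nonneg v
      generalize u^2 = s at h' hs
      generalize v^2 = t at h' ht
      omega
    · have h' : 2*(p:ℤ) = 4*u^2 + 4*u + 12*v^2 + 12*v + 4 := by linear_combination -hk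
      have hs := sq_nonneg u; have ht := sq_nonneg v
      generalize u^2 = s at h' hs
      generalize v^2 = t at h' ht
      omega
  · -- k = 3
    have h3X : (3:ℤ) ∣ X := by
      have h3 : Prime (3:ℤ) := Int.prime_three
      apply h3.dvd_of_dvd_pow (n := 2)
      exact ⟨(p:ℤ) - Y^2, by linarith⟩
    obtain ⟨Z, hZ⟩ := h3X
    subst hZ
    exact ⟨Y, Z, by linarith⟩


lemma rep4 (p : ℕ) (hp : p.Prime) (hp3 : p % 3 = 1)
    (a b : ℤ) (hab : (p : ℤ) = a ^ 2 + 3 * b ^ 2) :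
    ∃ L M : ℤ, 4 * (p : ℤ) = L ^ 2 + 27 * M ^ 2 := by
  have hna : ¬ (3:ℤ) ∣ a := by
    rintro ⟨a', rfl⟩
    have h3 : (3:ℤ) ∣ (p:ℤ) := ⟨3*a'^2 + b^2, by linarith⟩
    have h3' : (3:ℕ) ∣ p := by exact_mod_cast h3
    rcases (Nat.prime_dvd_prime_iff_eq Nat.prime_three hp).mp h3' with rfl
    omega
  have hb3 : b % 3 = 0 ∨ b % 3 = 1 ∨ b % 3 = 2 := by omega
  have ha3 : a % 3 = 1 ∨ a % 3 = 2 := by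
    have : a % 3 = 0 ∨ a % 3 = 1 ∨ a % 3 = 2 := by omega
    rcases this with h | h
    · exact absurd (by omega) hna
    · omega
  rcases hb3 with h | h | h
  · obtain ⟨c, hc⟩ : (3:ℤ) ∣ b := by omega
    exact ⟨2*a, 2*c, by subst hc; linear_combination 4 * hab⟩
  · rcases ha3 with h' | h'
    · -- a ≡ 1, b ≡ 1 : 3 ∣ a - b
      obtain ⟨c, hc⟩ : (3:ℤ) ∣ (a - b) := by omega
      exact ⟨a + 3*b, c, by linear_combination 4 * hab + 3*(a - b + 3*c) * hc⟩
    · -- a ≡ 2, b ≡ 1 : 3 ∣ a + b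
      obtain ⟨c, hc⟩ : (3:ℤ) ∣ (a + b) := by omega
      exact ⟨a - 3*b, c, by linear_combination 4 * hab + 3*(a + b + 3*c) * hc⟩
  · rcases ha3 with h' | h'
    · obtain ⟨c, hc⟩ : (3:ℤ) ∣ (a + b) := by omega
      exact ⟨a - 3*b, c, by linear_combination 4 * hab + 3*(a + b + 3*c) * hc⟩
    · obtain ⟨c, hc⟩ : (3:ℤ) ∣ (a - b) := by omega
      exact ⟨a + 3*b, c, by linear_combination 4 * hab + 3*(a - b + 3*c) * hc⟩


lemma uniq (p : ℕ) (hp : p.Prime)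
    (L₁ M₁ L₂ M₂ : ℤ) (h₁ : 4 * (p : ℤ) = L₁ ^ 2 + 27 * M₁ ^ 2)
    (h₂ : 4 * (p : ℤ) = L₂ ^ 2 + 27 * M₂ ^ 2) :
    (L₁ = L₂ ∨ L₁ = -L₂) ∧ (M₁ = M₂ ∨ M₁ = -M₂) := by
  have hppos : (0:ℤ) < p := by exact_mod_cast hp.pos
  have key : L₁ * M₂ = L₂ * M₁ ∨ L₁ * M₂ = -(L₂ * M₁) := by
    have hprod : (p:ℤ) ∣ (L₁ * M₂ - L₂ * M₁) * (L₁ * M₂ + L₂ * M₁) := by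
      refine ⟨4 * (M₂^2 - M₁^2), ?_⟩
      linear_combination -M₂^2 * h₁ + M₁^2 * h₂
    have habs : ∀ s : ℤ, (p:ℤ) ∣ s → 27 * s^2 ≤ 16 * (p:ℤ)^2 → s = 0 := by
      intro s hdvd hle
      by_contra hs
      have h1 : (p:ℤ) ≤ |s| := Int.le_of_dvd (abs_pos.mpr hs) ((dvd_abs _ _).mpr hdvd)
      have h2 : (p:ℤ)^2 ≤ s^2 := by
        calc (p:ℤ)^2 ≤ |s|^2 := by nlinarith [abs_nonneg s]
        _ = s^2 := sq_abs s
      nlinarith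
    rcases (Int.Prime.dvd_mul' hp hprod) with h | h
    · left
      have : L₁ * M₂ - L₂ * M₁ = 0 := by
        apply habs _ h
        nlinarith [sq_nonneg (L₁*L₂ + 27*M₁*M₂), sq_nonneg (L₁*M₂ - L₂*M₁),
          sq_nonneg (L₁*M₂ + L₂*M₁)]
      linarith
    · right
      have : L₁ * M₂ + L₂ * M₁ = 0 := by
        apply habs _ h
        nlinarith [sq_nonneg (L₁*L₂ - 27*M₁*M₂), sq_nonneg (L₁*M₂ + L₂*M₁)]
      linarith
  have hM : M₁^2 = M₂^2 := by
    have h4 : 4 * (p:ℤ) * M₂^2 = 4 * (p:ℤ) * M₁^2 := by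
      rcases key with h | h
      · linear_combination M₂^2 * h₁ - M₁^2 * h₂ + (L₁*M₂ + L₂*M₁) * h
      · linear_combination M₂^2 * h₁ - M₁^2 * h₂ + (L₁*M₂ - L₂*M₁) * h
    have := mul_left_cancel₀ (a := 4 * (p:ℤ)) (by positivity) h4
    linarith
  have hL : L₁^2 = L₂^2 := by linarith
  constructor
  · rcases mul_eq_zero.mp (show (L₁ - L₂) * (L₁ + L₂) = 0 by linear_combination hL) with h | h
    · left; linarith
    · right; linarith
  · rcases mul_eq_zero.mp (show (M₁ - M₂) * (M₁ + M₂) = 0 by linear_combination hM) with h | h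
    · left; linarith
    · right; linarith

/-- Every prime p ≡ 1 (mod 3) admits integers L, M with 4p = L² + 27M², and these
are unique up to sign. -/
theorem four_p_eq_L_sq_add_27_M_sq (p : ℕ) (hp : p.Prime) (hp3 : p % 3 = 1) :
    (∃ L M : ℤ, 4 * (p : ℤ) = L ^ 2 + 27 * M ^ 2) ∧
      ∀ L₁ M₁ L₂ M₂ : ℤ, 4 * (p : ℤ) = L₁ ^ 2 + 27 * M₁ ^ 2 →
        4 * (p : ℤ) = L₂ ^ 2 + 27 * M₂ ^ 2 →
          (L₁ = L₂ ∨ L₁ = -L₂) ∧ (M₁ = M₂ ∨ M₁ = -M₂) := by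
  constructor
  · obtain ⟨X, Y, hdvd, hpos, hlt⟩ := thue p hp hp3
    obtain ⟨a, b, hab⟩ := rep_p p hp hp3 X Y hdvd hpos hlt
    exact rep4 p hp hp3 a b hab
  · intro L₁ M₁ L₂ M₂ h₁ h₂
    exact uniq p hp L₁ M₁ L₂ M₂ h₁ h₂
end
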